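/- arXiv:1303.3254 — 3 statements merged into one kernel-verified Lean document; each statement's English description precedes it below -/
import Mathlib

section
/- Let u ∈ W^{2,2}(Ω) be a strong solution of a u_xx + b u_xy + c u_yy = 0. Then U = (u_x, u_y) belongs to W^{1,2}(Ω,ℝ²) and is a weak solution of the divergence-form system (A₁₁U_x)_x + (A₂₁U_x)_y + (A₁₂U_y)_x + (A₂₂U_y)_y = 0, i.e. ∫_Ω [(A₁₁U_x + A₁₂U_y)·η_x + (A₂₁U_x + A₂₂U_y)·η_y] dx dy = 0 for every η ∈ C_c^∞(Ω,ℝ²). -/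
open MeasureTheory Real Set Filter Metric intervalIntegral Matrix

noncomputable section

attribute [local instance] Matrix.normedAddCommGroup Matrix.normedSpace

/-- The Euclidean plane. -/
abbrev R2 : Type := EuclideanSpace ℝ (Fin 2)

/-- The unit vector `(cos φ, sin φ)` in the plane. -/
def unitC (φ : ℝ) : R2 := (WithLp.equiv 2 (Fin 2 → ℝ)).symm ![Real.cos φ, Real.sin φ]

/-- The components `(cos φ, sin φ)` as a plain pair. -/
def θc (φ : ℝ) : Fin 2 → ℝ := ![Real.cos φ, Real.sin φ]

/-- Standard basis vectors of the plane. -/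
def e1 : R2 := EuclideanSpace.single 0 1
def e2 : R2 := EuclideanSpace.single 1 1
def eV : Fin 2 → R2 := ![e1, e2]

/-- `ω` is a modulus of continuity on `[0,1)`: continuous, nondecreasing, vanishing at `0`. -/
def ModCont (ω : ℝ → ℝ) : Prop :=
  ContinuousOn ω (Ico 0 1) ∧ MonotoneOn ω (Ico 0 1) ∧ ω 0 = 0

/-- The square-Dini condition `∫₀¹ ω(r)² r⁻¹ dr < ∞`. -/
def SquareDini (ω : ℝ → ℝ) : Prop :=
  IntegrableOn (fun r => (ω r) ^ 2 / r) (Ioo 0 1)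

/-- `ā₁(r) = ⨍ a(rθ) (θ₂² - θ₁²) dφ`. -/
def abar1 (a : R2 → ℝ) (r : ℝ) : ℝ :=
  (2 * π)⁻¹ * ∫ φ in (0:ℝ)..(2 * π), a (r • unitC φ) * ((Real.sin φ) ^ 2 - (Real.cos φ) ^ 2)

/-- `ā₂(r) = -2 ⨍ a(rθ) θ₁ θ₂ dφ`. -/
def abar2 (a : R2 → ℝ) (r : ℝ) : ℝ :=
  (-2) * ((2 * π)⁻¹ * ∫ φ in (0:ℝ)..(2 * π), a (r • unitC φ) * (Real.cos φ * Real.sin φ))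

/-- The 4×4 matrix `R(r)` built from the second spherical moments of the coefficients. -/
def Rmat (a b c : R2 → ℝ) (r : ℝ) : Matrix (Fin 4) (Fin 4) ℝ :=
  !![abar1 a r, 0, abar1 b r, abar1 c r;
     abar2 a r, abar2 b r, 0, abar2 c r;
     abar2 a r, 0, abar2 b r, abar2 c r;
     -abar1 a r, -abar1 b r, 0, -abar1 c r]

/-- A (locally absolutely continuous) solution of `dφ/dt + R(e^{-t}) φ = 0` on `(0,∞)`,
encoded by the equivalent integral equation. -/
def IsSolDS (R : ℝ → Matrix (Fin 4) (Fin 4) ℝ) (φ : ℝ → Fin 4 → ℝ) : Prop :=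
  (∀ s t : ℝ, 0 < s → 0 < t →
    IntervalIntegrable (fun τ => (R (Real.exp (-τ))).mulVec (φ τ)) volume s t) ∧
  (∀ s t : ℝ, 0 < s → 0 < t →
    φ t - φ s = - ∫ τ in s..t, (R (Real.exp (-τ))).mulVec (φ τ))

/-- Uniform stability of the dynamical system `dφ/dt + R(e^{-t}) φ = 0`. -/
def UnifStable (R : ℝ → Matrix (Fin 4) (Fin 4) ℝ) : Prop :=
  ∀ ε > (0:ℝ), ∃ δ > (0:ℝ), ∀ φ : ℝ → Fin 4 → ℝ, IsSolDS R φ →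
    ∀ t₁ > (0:ℝ), ‖φ t₁‖ < δ → ∀ t ≥ t₁, ‖φ t‖ < ε

/-- A solution is asymptotically constant: it tends to a finite limit at `∞`. -/
def AsympConst (φ : ℝ → Fin 4 → ℝ) : Prop := ∃ L : Fin 4 → ℝ, Tendsto φ atTop (nhds L)

/-- Bounded measurable, uniformly elliptic coefficients on `Ω`. -/
def CoeffHyp (Ω : Set R2) (a b c : R2 → ℝ) : Prop :=
  Measurable a ∧ Measurable b ∧ Measurable c ∧
  (∃ M : ℝ, ∀ x ∈ Ω, |a x| ≤ M ∧ |b x| ≤ M ∧ |c x| ≤ M) ∧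
  (∃ lam > (0:ℝ), ∀ x ∈ Ω, ∀ ξ : Fin 2 → ℝ,
    lam * ((ξ 0) ^ 2 + (ξ 1) ^ 2) ≤ a x * (ξ 0) ^ 2 + b x * (ξ 0 * ξ 1) + c x * (ξ 1) ^ 2)

/-- Normalization: `|a-1| + |b| + |c-1| ≤ ω(|x|)` for all sufficiently small `|x| > 0`. -/
def OscBound (Ω : Set R2) (ω : ℝ → ℝ) (a b c : R2 → ℝ) : Prop :=
  ∃ r₀ : ℝ, 0 < r₀ ∧ r₀ < 1 ∧ ball (0:R2) r₀ ⊆ Ω ∧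
    ∀ x : R2, 0 < ‖x‖ → ‖x‖ < r₀ → |a x - 1| + |b x| + |c x - 1| ≤ ω ‖x‖

/-- A smooth, compactly supported test function with support in `Ω`. -/
def TestFun {F : Type*} [NormedAddCommGroup F] [NormedSpace ℝ F]
    (Ω : Set R2) (η : R2 → F) : Prop :=
  ContDiff ℝ (⊤ : ℕ∞) η ∧ HasCompactSupport η ∧ tsupport η ⊆ Ω

/-- `g` is the weak partial derivative of the scalar function `f` in direction `v` on `Ω`. -/
def HasWeakPD (Ω : Set R2) (v : R2) (f g : R2 → ℝ) : Prop :=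
  ∀ η : R2 → ℝ, TestFun Ω η →
    ∫ x in Ω, f x * fderiv ℝ η x v = - ∫ x in Ω, g x * η x

/-- `g` is the weak partial derivative of the vector function `f` in direction `v` on `Ω`. -/
def HasWeakPDV (Ω : Set R2) (v : R2) (f g : R2 → Fin 2 → ℝ) : Prop :=
  ∀ η : R2 → ℝ, TestFun Ω η →
    ∫ x in Ω, fderiv ℝ η x v • f x = - ∫ x in Ω, η x • g x

/-- The 2×2 matrix coefficients of the divergence-form system. -/
def A11 (a : R2 → ℝ) (x : R2) : Matrix (Fin 2) (Fin 2) ℝ := !![a x, 0; 0, 1]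
def A12 (b c : R2 → ℝ) (x : R2) : Matrix (Fin 2) (Fin 2) ℝ := !![b x, c x - 1; 0, 0]
def A21 (a b : R2 → ℝ) (x : R2) : Matrix (Fin 2) (Fin 2) ℝ := !![0, 0; a x - 1, b x]
def A22 (c : R2 → ℝ) (x : R2) : Matrix (Fin 2) (Fin 2) ℝ := !![1, 0; 0, c x]

/-- The coefficient array `A_{ij}`. -/
def Amat (a b c : R2 → ℝ) : Fin 2 → Fin 2 → R2 → Matrix (Fin 2) (Fin 2) ℝ :=
  ![![A11 a, A12 b c], ![A21 a b, A22 c]]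

/-- `U ∈ W^{1,2}(Ω, ℝ²)` with weak gradient `(Ux, Uy)` is a weak solution of
`(A₁₁ U_x)_x + (A₂₁ U_x)_y + (A₁₂ U_y)_x + (A₂₂ U_y)_y = 0`. -/
def WeakSolDiv (Ω : Set R2) (a b c : R2 → ℝ) (U Ux Uy : R2 → Fin 2 → ℝ) : Prop :=
  MemLp U 2 (volume.restrict Ω) ∧ MemLp Ux 2 (volume.restrict Ω) ∧
  MemLp Uy 2 (volume.restrict Ω) ∧
  HasWeakPDV Ω e1 U Ux ∧ HasWeakPDV Ω e2 U Uy ∧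
  ∀ η : R2 → Fin 2 → ℝ, TestFun Ω η →
    ∫ x in Ω,
      (((A11 a x).mulVec (Ux x) + (A12 b c x).mulVec (Uy x)) ⬝ᵥ fderiv ℝ η x e1
        + ((A21 a b x).mulVec (Ux x) + (A22 c x).mulVec (Uy x)) ⬝ᵥ fderiv ℝ η x e2) = 0

/-- `u ∈ W^{2,2}(Ω)` is a strong solution of `a u_xx + b u_xy + c u_yy = 0`, with weak
derivatives `ux, uy` and weak second derivatives `uxx, uxy, uyy`, all in `L²(Ω)`. -/
def StrongSol (Ω : Set R2) (a b c u ux uy uxx uxy uyy : R2 → ℝ) : Prop :=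
  MemLp u 2 (volume.restrict Ω) ∧ MemLp ux 2 (volume.restrict Ω) ∧
  MemLp uy 2 (volume.restrict Ω) ∧ MemLp uxx 2 (volume.restrict Ω) ∧
  MemLp uxy 2 (volume.restrict Ω) ∧ MemLp uyy 2 (volume.restrict Ω) ∧
  HasWeakPD Ω e1 u ux ∧ HasWeakPD Ω e2 u uy ∧
  HasWeakPD Ω e1 ux uxx ∧ HasWeakPD Ω e2 ux uxy ∧ HasWeakPD Ω e2 uy uyy ∧
  (∀ᵐ x ∂(volume.restrict Ω), a x * uxx x + b x * uxy x + c x * uyy x = 0)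

/-- The gradient `(ux, uy)` has a representative continuous near `0` that is
Lipschitz continuous at `0`. -/
def GradLipAtZero (Ω : Set R2) (ux uy : R2 → ℝ) : Prop :=
  ∃ G : R2 → Fin 2 → ℝ, ∃ r₁ > (0:ℝ), ball (0:R2) r₁ ⊆ Ω ∧
    (∀ᵐ x ∂(volume.restrict (ball (0:R2) r₁)), G x = ![ux x, uy x]) ∧
    ContinuousOn G (ball (0:R2) r₁) ∧
    ∃ C > (0:ℝ), ∃ r₂ > (0:ℝ), ∀ x : R2, ‖x‖ < r₂ → ‖G x - G 0‖ ≤ C * ‖x‖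

/-- The gradient `(ux, uy)` has a representative continuous near `0` that is
differentiable at `0`. -/
def GradDiffAtZero (Ω : Set R2) (ux uy : R2 → ℝ) : Prop :=
  ∃ G : R2 → Fin 2 → ℝ, ∃ r₁ > (0:ℝ), ball (0:R2) r₁ ⊆ Ω ∧
    (∀ᵐ x ∂(volume.restrict (ball (0:R2) r₁)), G x = ![ux x, uy x]) ∧
    ContinuousOn G (ball (0:R2) r₁) ∧
    ∃ L : R2 →L[ℝ] (Fin 2 → ℝ), HasFDerivAt G L 0

/-- The spherical mean `U₀(r) = ⨍ U(rθ) dφ`. -/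
def U0fun (U : R2 → Fin 2 → ℝ) (r : ℝ) : Fin 2 → ℝ :=
  (2 * π)⁻¹ • ∫ φ in (0:ℝ)..(2 * π), U (r • unitC φ)

/-- The first spherical moments `V_k(r) = (2/r) ⨍ U(rθ) θ_k dφ`. -/
def Vfun (U : R2 → Fin 2 → ℝ) (r : ℝ) (k : Fin 2) : Fin 2 → ℝ :=
  (2 / r) • ((2 * π)⁻¹ • ∫ φ in (0:ℝ)..(2 * π), θc φ k • U (r • unitC φ))

/-- The remainder `W(x) = U(x) - U₀(|x|) - V₁(|x|) x₁ - V₂(|x|) x₂`. -/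
def Wfun (U : R2 → Fin 2 → ℝ) (x : R2) : Fin 2 → ℝ :=
  U x - U0fun U ‖x‖ - x 0 • Vfun U ‖x‖ 0 - x 1 • Vfun U ‖x‖ 1

/-- A (locally absolutely continuous) solution of the scalar equation `φ' + p φ = 0` on
`(0,∞)`, encoded by the equivalent integral equation. -/
def IsSolScalar (p φ : ℝ → ℝ) : Prop :=
  (∀ s t : ℝ, 0 < s → 0 < t → IntervalIntegrable (fun τ => p τ * φ τ) volume s t) ∧
  (∀ s t : ℝ, 0 < s → 0 < t → φ t - φ s = - ∫ τ in s..t, p τ * φ τ)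


section AuxNV

private lemma testFun_deriv {Ω : Set R2} {η : R2 → ℝ} (hη : TestFun Ω η) (v : R2) :
    TestFun Ω (fun x => fderiv ℝ η x v) := by
  obtain ⟨h1, h2, h3⟩ := hη
  refine ⟨(ContinuousLinearMap.apply ℝ ℝ v).contDiff.comp (h1.fderiv_right (by simp)),
    (h2.fderiv ℝ).comp_left (g := fun L : R2 →L[ℝ] ℝ => L v) rfl, ?_⟩
  refine (closure_mono ?_).trans ((tsupport_fderiv_subset ℝ).trans h3)
  exact Function.support_comp_subset (g := fun L : R2 →L[ℝ] ℝ => L v) rfl _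

private lemma testFun_comp {Ω : Set R2} {η : R2 → Fin 2 → ℝ} (hη : TestFun Ω η) (i : Fin 2) :
    TestFun Ω (fun x => η x i) := by
  obtain ⟨h1, h2, h3⟩ := hη
  refine ⟨(contDiff_pi.mp h1) i, h2.comp_left (g := fun p : Fin 2 → ℝ => p i) rfl, ?_⟩
  refine (closure_mono ?_).trans h3
  exact Function.support_comp_subset (g := fun p : Fin 2 → ℝ => p i) rfl _

private lemma fderiv_comp_eval {η : R2 → Fin 2 → ℝ} (hη : ContDiff ℝ (⊤ : ℕ∞) η) (i : Fin 2)
    (x v : R2) : fderiv ℝ (fun y => η y i) x v = fderiv ℝ η x v i := by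
  have h : (fun y => η y i)
      = (ContinuousLinearMap.proj (R := ℝ) (φ := fun _ : Fin 2 => ℝ) i) ∘ η := rfl
  rw [h, fderiv_comp _ (ContinuousLinearMap.differentiableAt _) (hη.differentiable (by simp) x)]
  simp

private lemma fderiv_swap {η : R2 → ℝ} (hη : ContDiff ℝ (⊤ : ℕ∞) η) (x v w : R2) :
    fderiv ℝ (fun y => fderiv ℝ η y v) x w = fderiv ℝ (fun y => fderiv ℝ η y w) x v := by
  have hd : Differentiable ℝ (fderiv ℝ η) := (hη.fderiv_right (m := 1) (WithTop.coe_le_coe.mpr le_top)).differentiable one_ne_zero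
  have key : ∀ p q : R2, fderiv ℝ (fun y => fderiv ℝ η y p) x q
      = fderiv ℝ (fderiv ℝ η) x q p := by
    intro p q
    have h : (fun y => fderiv ℝ η y p) = (ContinuousLinearMap.apply ℝ ℝ p) ∘ (fderiv ℝ η) := rfl
    rw [h, fderiv_comp _ (ContinuousLinearMap.differentiableAt _) (hd x)]
    simp
  rw [key, key]
  exact (hη.contDiffAt.isSymmSndFDerivAt (by rw [minSmoothness_of_isRCLikeNormedField]; exact WithTop.coe_le_coe.mpr (le_top : (2:ℕ∞) ≤ ⊤))) w v

private lemma int_mulNV {μ : Measure R2} {f g : R2 → ℝ} (hf : MemLp f 2 μ) (hg : MemLp g 2 μ) :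
    Integrable (fun x => f x * g x) μ := by
  have h := hg.smul hf (p := 2) (q := 2) (r := 1)
    (hpqr := ⟨by rw [inv_one]; exact ENNReal.inv_two_add_inv_two⟩)
  exact memLp_one_iff_integrable.mp h

private lemma testFun_memL2 {Ω : Set R2} {η : R2 → ℝ} (hη : TestFun Ω η) :
    MemLp η 2 (volume.restrict Ω) :=
  (hη.1.continuous.memLp_of_hasCompactSupport hη.2.1).restrict Ω

private lemma memL2_pair {μ : Measure R2} {f g : R2 → ℝ} (hf : MemLp f 2 μ)
    (hg : MemLp g 2 μ) : MemLp (fun x => ![f x, g x]) 2 μ := by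
  have h0 : MemLp (fun x : R2 => f x • (![1, 0] : Fin 2 → ℝ)) 2 μ :=
    (memLp_top_const _).smul hf
  have h1 : MemLp (fun x : R2 => g x • (![0, 1] : Fin 2 → ℝ)) 2 μ :=
    (memLp_top_const _).smul hg
  refine (h0.add h1).ae_eq (Eventually.of_forall fun x => ?_)
  funext i; fin_cases i <;> simp

private lemma integrable_pairNV {μ : Measure R2} {f g : R2 → ℝ} (hf : Integrable f μ)
    (hg : Integrable g μ) : Integrable (fun x => ![f x, g x]) μ := by
  refine ((hf.smul_const (![1, 0] : Fin 2 → ℝ)).add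
    (hg.smul_const (![0, 1] : Fin 2 → ℝ))).congr (Eventually.of_forall fun x => ?_)
  funext i; fin_cases i <;> simp

private lemma integral_applyNV {f : R2 → Fin 2 → ℝ} {μ : Measure R2} (hf : Integrable f μ)
    (i : Fin 2) : (∫ x, f x ∂μ) i = ∫ x, f x i ∂μ := by
  have h := (ContinuousLinearMap.proj (R := ℝ) (φ := fun _ : Fin 2 => ℝ) i).integral_comp_comm hf
  simpa using h.symm

private lemma swap_identity {Ω : Set R2} {w f g : R2 → ℝ}
    (h1 : HasWeakPD Ω e1 w f) (h2 : HasWeakPD Ω e2 w g)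
    {φ : R2 → ℝ} (hφ : TestFun Ω φ) :
    ∫ x in Ω, f x * fderiv ℝ φ x e2 = ∫ x in Ω, g x * fderiv ℝ φ x e1 := by
  have hA := h1 (fun x => fderiv ℝ φ x e2) (testFun_deriv hφ e2)
  have hB := h2 (fun x => fderiv ℝ φ x e1) (testFun_deriv hφ e1)
  have hsw : (∫ x in Ω, w x * fderiv ℝ (fun y => fderiv ℝ φ y e2) x e1)
      = ∫ x in Ω, w x * fderiv ℝ (fun y => fderiv ℝ φ y e1) x e2 := by
    refine integral_congr_ae (Eventually.of_forall fun x => ?_)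
    simp only [fderiv_swap hφ.1 x e2 e1]
  rw [hsw] at hA
  linarith

end AuxNV

/-- If `u ∈ W^{2,2}(Ω)` is a strong solution of `a u_xx + b u_xy + c u_yy = 0`, then
`U = (u_x, u_y)` belongs to `W^{1,2}(Ω, ℝ²)` and is a weak solution of the
divergence-form system. -/
theorem statement10
    (Ω : Set R2) (hΩo : IsOpen Ω) (hΩ0 : (0:R2) ∈ Ω)
    (a b c : R2 → ℝ) (hco : CoeffHyp Ω a b c)
    (u ux uy uxx uxy uyy : R2 → ℝ)
    (hsol : StrongSol Ω a b c u ux uy uxx uxy uyy) :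
    WeakSolDiv Ω a b c (fun x => ![ux x, uy x])
      (fun x => ![uxx x, uxy x]) (fun x => ![uxy x, uyy x]) := by
  obtain ⟨hu2, hux2, huy2, huxx2, huxy2, huyy2, hwx, hwy, hwxx, hwxy, hwyy, hpde⟩ := hsol
  have hwyx : HasWeakPD Ω e1 uy uxy := by
    intro φ hφ
    have h1 := swap_identity hwx hwy hφ
    have h2 := hwxy φ hφ
    linarith
  have key1 : ∀ φ : R2 → ℝ, TestFun Ω φ →
      ∫ x in Ω, uxy x * fderiv ℝ φ x e2 = ∫ x in Ω, uyy x * fderiv ℝ φ x e1 :=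
    fun φ hφ => swap_identity hwyx hwyy hφ
  have key2 : ∀ φ : R2 → ℝ, TestFun Ω φ →
      ∫ x in Ω, uxy x * fderiv ℝ φ x e1 = ∫ x in Ω, uxx x * fderiv ℝ φ x e2 :=
    fun φ hφ => (swap_identity hwxx hwxy hφ).symm
  have hpdv : ∀ (v : R2) (f g f' g' : R2 → ℝ),
      MemLp f 2 (volume.restrict Ω) → MemLp g 2 (volume.restrict Ω) →
      MemLp f' 2 (volume.restrict Ω) → MemLp g' 2 (volume.restrict Ω) →
      HasWeakPD Ω v f f' → HasWeakPD Ω v g g' →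
      HasWeakPDV Ω v (fun x => ![f x, g x]) (fun x => ![f' x, g' x]) := by
    intro v f g f' g' hfL hgL hf'L hg'L hf hg φ hφ
    have hd : MemLp (fun x => fderiv ℝ φ x v) 2 (volume.restrict Ω) :=
      testFun_memL2 (testFun_deriv hφ v)
    have hφ2 : MemLp φ 2 (volume.restrict Ω) := testFun_memL2 hφ
    have hA : Integrable (fun x => fderiv ℝ φ x v • (![f x, g x] : Fin 2 → ℝ))
        (volume.restrict Ω) := by
      refine (integrable_pairNV (int_mulNV hd hfL) (int_mulNV hd hgL)).congr
        (Eventually.of_forall fun x => ?_)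
      funext i; fin_cases i <;> simp
    have hB : Integrable (fun x => φ x • (![f' x, g' x] : Fin 2 → ℝ))
        (volume.restrict Ω) := by
      refine (integrable_pairNV (int_mulNV hφ2 hf'L) (int_mulNV hφ2 hg'L)).congr
        (Eventually.of_forall fun x => ?_)
      funext i; fin_cases i <;> simp
    funext i
    rw [Pi.neg_apply, integral_applyNV hA i, integral_applyNV hB i]
    fin_cases i
    · simpa [mul_comm] using hf φ hφ
    · simpa [mul_comm] using hg φ hφ
  refine ⟨memL2_pair hux2 huy2, memL2_pair huxx2 huxy2, memL2_pair huxy2 huyy2,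
    hpdv e1 ux uy uxx uxy hux2 huy2 huxx2 huxy2 hwxx hwyx,
    hpdv e2 ux uy uxy uyy hux2 huy2 huxy2 huyy2 hwxy hwyy, ?_⟩
  intro η hη
  have hη0 : TestFun Ω (fun x => η x 0) := testFun_comp hη 0
  have hη1 : TestFun Ω (fun x => η x 1) := testFun_comp hη 1
  have hrw : ∀ x : R2,
      ((A11 a x).mulVec ![uxx x, uxy x] + (A12 b c x).mulVec ![uxy x, uyy x])
          ⬝ᵥ fderiv ℝ η x e1
        + ((A21 a b x).mulVec ![uxx x, uxy x] + (A22 c x).mulVec ![uxy x, uyy x])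
          ⬝ᵥ fderiv ℝ η x e2
      = (a x * uxx x + b x * uxy x + c x * uyy x)
            * (fderiv ℝ (fun y => η y 0) x e1 + fderiv ℝ (fun y => η y 1) x e2)
        + (uxy x * fderiv ℝ (fun y => η y 0) x e2 - uyy x * fderiv ℝ (fun y => η y 0) x e1)
        + (uxy x * fderiv ℝ (fun y => η y 1) x e1 - uxx x * fderiv ℝ (fun y => η y 1) x e2) := by
    intro x
    rw [fderiv_comp_eval hη.1 0 x e1, fderiv_comp_eval hη.1 0 x e2,
        fderiv_comp_eval hη.1 1 x e1, fderiv_comp_eval hη.1 1 x e2]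
    simp [A11, A12, A21, A22, Matrix.mulVec, dotProduct, Fin.sum_univ_two]
    ring
  have hd01 : MemLp (fun x => fderiv ℝ (fun y => η y 0) x e1) 2 (volume.restrict Ω) :=
    testFun_memL2 (testFun_deriv hη0 e1)
  have hd02 : MemLp (fun x => fderiv ℝ (fun y => η y 0) x e2) 2 (volume.restrict Ω) :=
    testFun_memL2 (testFun_deriv hη0 e2)
  have hd11 : MemLp (fun x => fderiv ℝ (fun y => η y 1) x e1) 2 (volume.restrict Ω) :=
    testFun_memL2 (testFun_deriv hη1 e1)
  have hd12 : MemLp (fun x => fderiv ℝ (fun y => η y 1) x e2) 2 (volume.restrict Ω) :=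
    testFun_memL2 (testFun_deriv hη1 e2)
  have h2a : Integrable (fun x => uxy x * fderiv ℝ (fun y => η y 0) x e2)
      (volume.restrict Ω) := int_mulNV huxy2 hd02
  have h2b : Integrable (fun x => uyy x * fderiv ℝ (fun y => η y 0) x e1)
      (volume.restrict Ω) := int_mulNV huyy2 hd01
  have h3a : Integrable (fun x => uxy x * fderiv ℝ (fun y => η y 1) x e1)
      (volume.restrict Ω) := int_mulNV huxy2 hd11
  have h3b : Integrable (fun x => uxx x * fderiv ℝ (fun y => η y 1) x e2)
      (volume.restrict Ω) := int_mulNV huxx2 hd12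
  have h2ab : Integrable (fun x => uxy x * fderiv ℝ (fun y => η y 0) x e2
      - uyy x * fderiv ℝ (fun y => η y 0) x e1) (volume.restrict Ω) := h2a.sub h2b
  have h3ab : Integrable (fun x => uxy x * fderiv ℝ (fun y => η y 1) x e1
      - uxx x * fderiv ℝ (fun y => η y 1) x e2) (volume.restrict Ω) := h3a.sub h3b
  have hPae : (fun x => (a x * uxx x + b x * uxy x + c x * uyy x)
        * (fderiv ℝ (fun y => η y 0) x e1 + fderiv ℝ (fun y => η y 1) x e2))
      =ᵐ[volume.restrict Ω] (fun _ => (0 : ℝ)) := by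
    filter_upwards [hpde] with x hx
    simp [hx]
  have hPint : Integrable (fun x => (a x * uxx x + b x * uxy x + c x * uyy x)
        * (fderiv ℝ (fun y => η y 0) x e1 + fderiv ℝ (fun y => η y 1) x e2))
      (volume.restrict Ω) := (integrable_zero _ _ _).congr hPae.symm
  calc ∫ x in Ω,
      (((A11 a x).mulVec (![uxx x, uxy x]) + (A12 b c x).mulVec (![uxy x, uyy x]))
          ⬝ᵥ fderiv ℝ η x e1
        + ((A21 a b x).mulVec (![uxx x, uxy x]) + (A22 c x).mulVec (![uxy x, uyy x]))
          ⬝ᵥ fderiv ℝ η x e2)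
      = ∫ x in Ω, ((a x * uxx x + b x * uxy x + c x * uyy x)
            * (fderiv ℝ (fun y => η y 0) x e1 + fderiv ℝ (fun y => η y 1) x e2)
        + (uxy x * fderiv ℝ (fun y => η y 0) x e2 - uyy x * fderiv ℝ (fun y => η y 0) x e1)
        + (uxy x * fderiv ℝ (fun y => η y 1) x e1 - uxx x * fderiv ℝ (fun y => η y 1) x e2)) :=
        integral_congr_ae (Eventually.of_forall hrw)
    _ = (∫ x in Ω, ((a x * uxx x + b x * uxy x + c x * uyy x)
            * (fderiv ℝ (fun y => η y 0) x e1 + fderiv ℝ (fun y => η y 1) x e2)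
          + (uxy x * fderiv ℝ (fun y => η y 0) x e2 - uyy x * fderiv ℝ (fun y => η y 0) x e1)))
        + ∫ x in Ω, (uxy x * fderiv ℝ (fun y => η y 1) x e1
            - uxx x * fderiv ℝ (fun y => η y 1) x e2) :=
        by
        have hP2 : Integrable (fun x => (a x * uxx x + b x * uxy x + c x * uyy x)
              * (fderiv ℝ (fun y => η y 0) x e1 + fderiv ℝ (fun y => η y 1) x e2)
            + (uxy x * fderiv ℝ (fun y => η y 0) x e2
              - uyy x * fderiv ℝ (fun y => η y 0) x e1)) (volume.restrict Ω) :=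
          hPint.add h2ab
        exact integral_add hP2 h3ab
    _ = ((∫ x in Ω, (a x * uxx x + b x * uxy x + c x * uyy x)
            * (fderiv ℝ (fun y => η y 0) x e1 + fderiv ℝ (fun y => η y 1) x e2))
          + ∫ x in Ω, (uxy x * fderiv ℝ (fun y => η y 0) x e2
              - uyy x * fderiv ℝ (fun y => η y 0) x e1))
        + ∫ x in Ω, (uxy x * fderiv ℝ (fun y => η y 1) x e1
            - uxx x * fderiv ℝ (fun y => η y 1) x e2) := by
        rw [integral_add hPint h2ab]
    _ = 0 := by
        rw [integral_sub h2a h2b, integral_sub h3a h3b, integral_congr_ae hPae,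
          key1 _ hη0, key2 _ hη1]
        simp
end
end

section
/- There is an absolute constant C such that the following holds. Let A_{ij} : B₁(0) → M₂(ℝ) be measurable with |A_{ij}(x) − δ_{ij} I| ≤ ω(|x|) for 0 < |x| < 1, and let W ∈ C¹(B₁(0)∖{0}, ℝ²) satisfy, for every r ∈ (0,1), ⨍ W(rθ) dφ = 0 and ⨍ W(rθ)θ_k dφ = 0 for k = 1,2. Then for every r ∈ (0,1): |⨍ (A_{i1}(rθ)θ_i W_x(rθ) + A_{i2}(rθ)θ_i W_y(rθ)) dφ| ≤ Cω(r) ⨍ |∇W(rθ)| dφ, |⨍ A_{ij}(rθ)θ_iθ_k ∂_jW(rθ) dφ| ≤ Cω(r) ⨍ |∇W(rθ)| dφ for k = 1,2, and |⨍ A_{ki}(rθ) ∂_iW(rθ) dφ| ≤ Cω(r) ⨍ |∇W(rθ)| dφ for k = 1,2 (summation over repeated indices). -/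
open MeasureTheory Real Set Filter Metric intervalIntegral Matrix

noncomputable section

attribute [local instance] Matrix.normedAddCommGroup Matrix.normedSpace

/-! ### Auxiliary lemmas -/

lemma unitC_eq (φ : ℝ) : unitC φ = Real.cos φ • e1 + Real.sin φ • e2 := by
  ext i
  fin_cases i <;>
    simp [unitC, e1, e2, EuclideanSpace.single_apply, WithLp.equiv_symm_apply]

lemma norm_unitC (φ : ℝ) : ‖unitC φ‖ = 1 := by
  rw [EuclideanSpace.norm_eq]
  simp [unitC, WithLp.equiv_symm_apply, Fin.sum_univ_two]

lemma norm_e1 : ‖e1‖ = 1 := by simp [e1]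
lemma norm_e2 : ‖e2‖ = 1 := by simp [e2]

lemma hasDerivAt_unitC (φ : ℝ) :
    HasDerivAt unitC ((-Real.sin φ) • e1 + Real.cos φ • e2) φ := by
  have h : ∀ ψ, unitC ψ = Real.cos ψ • e1 + Real.sin ψ • e2 := unitC_eq
  simp only [funext h]
  exact ((Real.hasDerivAt_cos φ).smul_const e1).add ((Real.hasDerivAt_sin φ).smul_const e2)

lemma continuous_unitC : Continuous unitC := by
  simp only [funext unitC_eq]
  exact (Real.continuous_cos.smul continuous_const).add
    (Real.continuous_sin.smul continuous_const)

lemma norm_smul_unitC (r φ : ℝ) : ‖r • unitC φ‖ = |r| := by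
  rw [norm_smul, norm_unitC, Real.norm_eq_abs, mul_one]

lemma mem_S {r : ℝ} (hr : r ∈ Ioo (0:ℝ) 1) (φ : ℝ) :
    r • unitC φ ∈ ball (0:R2) 1 \ {0} := by
  constructor
  · simp [mem_ball, dist_eq_norm, norm_smul_unitC, abs_of_pos hr.1, hr.2]
  · simp only [mem_singleton_iff]
    intro h
    have := norm_smul_unitC r φ
    rw [h] at this
    simp [abs_of_pos hr.1] at this
    exact absurd this (ne_of_gt hr.1).symm

lemma mulVec_norm_le (M : Matrix (Fin 2) (Fin 2) ℝ) (v : Fin 2 → ℝ) :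
    ‖M.mulVec v‖ ≤ 2 * ‖M‖ * ‖v‖ := by
  rw [show (2:ℝ) * ‖M‖ * ‖v‖ = ‖M‖*‖v‖ + ‖M‖*‖v‖ by ring]
  have hb : (0:ℝ) ≤ ‖M‖*‖v‖ + ‖M‖*‖v‖ := by positivity
  rw [pi_norm_le_iff_of_nonneg hb]
  intro k
  have : M.mulVec v k = M k 0 * v 0 + M k 1 * v 1 := by
    simp [Matrix.mulVec, dotProduct, Fin.sum_univ_two]
  rw [this, Real.norm_eq_abs]
  refine (abs_add_le _ _).trans (add_le_add ?_ ?_) <;>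
  · rw [abs_mul]
    exact mul_le_mul (Matrix.norm_entry_le_entrywise_sup_norm M)
      (norm_le_pi_norm v _) (abs_nonneg _) (norm_nonneg _)

lemma isOpen_S : IsOpen (ball (0:R2) 1 \ {0}) :=
  isOpen_ball.sdiff isClosed_singleton

section Wlemmas
variable {W : R2 → Fin 2 → ℝ}

lemma W_diffAt (hW : ContDiffOn ℝ 1 W (ball (0:R2) 1 \ {0}))
    {x : R2} (hx : x ∈ ball (0:R2) 1 \ {0}) : DifferentiableAt ℝ W x :=
  (hW.differentiableOn one_ne_zero).differentiableAt (isOpen_S.mem_nhds hx)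

lemma W_contOn (hW : ContDiffOn ℝ 1 W (ball (0:R2) 1 \ {0})) :
    ContinuousOn W (ball (0:R2) 1 \ {0}) := hW.continuousOn

lemma fderiv_contOn (hW : ContDiffOn ℝ 1 W (ball (0:R2) 1 \ {0})) :
    ContinuousOn (fderiv ℝ W) (ball (0:R2) 1 \ {0}) :=
  hW.continuousOn_fderiv_of_isOpen isOpen_S le_rfl

/-- Key radial differentiation lemma. -/
lemma radial_zero (hW : ContDiffOn ℝ 1 W (ball (0:R2) 1 \ {0}))
    (ψ : ℝ → ℝ) (hψc : Continuous ψ) (hψ : ∀ φ, |ψ φ| ≤ 1)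
    (hzero : ∀ ρ ∈ Ioo (0:ℝ) 1, (∫ φ in (0:ℝ)..(2*π), ψ φ • W (ρ • unitC φ)) = 0)
    {r : ℝ} (hr : r ∈ Ioo (0:ℝ) 1) :
    (∫ φ in (0:ℝ)..(2*π), ψ φ • (fderiv ℝ W (r • unitC φ) (unitC φ))) = 0 := by
  obtain ⟨hr0, hr1⟩ := hr
  set ε := min (r/2) ((1-r)/2) with hε
  have hε0 : 0 < ε := lt_min (by linarith) (by linarith)
  have hρmem : ∀ ρ ∈ ball r ε, ρ ∈ Ioo (0:ℝ) 1 := by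
    intro ρ hρ
    rw [mem_ball, Real.dist_eq, abs_lt] at hρ
    have h1 : ε ≤ r/2 := min_le_left _ _
    have h2 : ε ≤ (1-r)/2 := min_le_right _ _
    constructor <;> [linarith [hρ.1]; linarith [hρ.2]]
  have hρK : ∀ ρ ∈ ball r ε, r/2 ≤ ρ ∧ ρ ≤ (1+r)/2 := by
    intro ρ hρ
    rw [mem_ball, Real.dist_eq, abs_lt] at hρ
    have h1 : ε ≤ r/2 := min_le_left _ _
    have h2 : ε ≤ (1-r)/2 := min_le_right _ _
    constructor <;> linarith [hρ.1, hρ.2]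
  set K : Set R2 := Metric.closedBall 0 ((1+r)/2) ∩ (Metric.ball 0 (r/2))ᶜ with hK
  have hKcompact : IsCompact K :=
    (isCompact_closedBall _ _).inter_right (isOpen_ball.isClosed_compl)
  have hKS : K ⊆ ball (0:R2) 1 \ {0} := by
    intro x ⟨hx1, hx2⟩
    simp only [mem_closedBall, dist_zero_right] at hx1
    simp only [mem_compl_iff, mem_ball, dist_zero_right, not_lt] at hx2
    refine ⟨by simp [mem_ball, dist_zero_right]; linarith, ?_⟩
    simp only [mem_singleton_iff]
    intro h
    rw [h, norm_zero] at hx2; linarith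
  have hmemK : ∀ ρ ∈ ball r ε, ∀ φ : ℝ, ρ • unitC φ ∈ K := by
    intro ρ hρ φ
    obtain ⟨ha, hb⟩ := hρK ρ hρ
    have h0 : 0 < ρ := lt_of_lt_of_le (by linarith) ha
    constructor
    · simp only [mem_closedBall, dist_zero_right, norm_smul_unitC, abs_of_pos h0]; exact hb
    · simp only [mem_compl_iff, mem_ball, dist_zero_right, not_lt, norm_smul_unitC,
        abs_of_pos h0]; exact ha
  obtain ⟨M, hM⟩ := hKcompact.exists_bound_of_continuousOn
    ((fderiv_contOn hW).mono hKS)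
  have key := intervalIntegral.hasDerivAt_integral_of_dominated_loc_of_deriv_le
    (F := fun ρ φ => ψ φ • W (ρ • unitC φ))
    (F' := fun ρ φ => ψ φ • (fderiv ℝ W (ρ • unitC φ) (unitC φ)))
    (x₀ := r) (a := 0) (b := 2*π) (μ := volume) (bound := fun _ => M) (s := ball r ε) (ball_mem_nhds r hε0)
    ?_ ?_ ?_ ?_ ?_ ?_
  · obtain ⟨-, hd⟩ := key
    have hg0 : (fun ρ => ∫ φ in (0:ℝ)..(2*π), ψ φ • W (ρ • unitC φ)) =ᶠ[nhds r] fun _ => 0 := by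
      filter_upwards [isOpen_Ioo.mem_nhds ⟨hr0, hr1⟩] with ρ hρ using hzero ρ hρ
    have hd0 : HasDerivAt (fun ρ => ∫ φ in (0:ℝ)..(2*π), ψ φ • W (ρ • unitC φ))
        ((0 : Fin 2 → ℝ)) r :=
      (hasDerivAt_const r (0 : Fin 2 → ℝ)).congr_of_eventuallyEq hg0
    exact hd.unique hd0
  · filter_upwards [isOpen_Ioo.mem_nhds ⟨hr0, hr1⟩] with ρ hρ
    have hc : Continuous fun φ => ψ φ • W (ρ • unitC φ) :=
      hψc.smul (((W_contOn hW).comp_continuous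
        (continuous_unitC.const_smul ρ) (mem_S hρ)))
    exact hc.aestronglyMeasurable
  · exact (hψc.smul (((W_contOn hW).comp_continuous
      (continuous_unitC.const_smul r) (mem_S ⟨hr0, hr1⟩)))).intervalIntegrable _ _
  · have hc : Continuous fun φ => ψ φ • (fderiv ℝ W (r • unitC φ) (unitC φ)) := by
      refine hψc.smul ?_
      exact ((fderiv_contOn hW).comp_continuous
        (continuous_unitC.const_smul r) (mem_S ⟨hr0, hr1⟩)).clm_apply continuous_unitC
    exact hc.aestronglyMeasurable
  · refine Eventually.of_forall fun φ _ ρ hρ => ?_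
    rw [norm_smul]
    calc ‖ψ φ‖ * ‖fderiv ℝ W (ρ • unitC φ) (unitC φ)‖
        ≤ 1 * (‖fderiv ℝ W (ρ • unitC φ)‖ * ‖unitC φ‖) :=
          mul_le_mul (by rw [Real.norm_eq_abs]; exact hψ φ)
            ((fderiv ℝ W (ρ • unitC φ)).le_opNorm _) (norm_nonneg _) zero_le_one
      _ ≤ M := by
          rw [norm_unitC, mul_one, one_mul]; exact hM _ (hmemK ρ hρ φ)
  · exact intervalIntegrable_const
  · refine Eventually.of_forall fun φ _ ρ hρ => ?_
    have h1 : HasDerivAt (fun ρ : ℝ => ρ • unitC φ) (unitC φ) ρ := by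
      simpa using (hasDerivAt_id ρ).smul_const (unitC φ)
    have h2 : HasFDerivAt W (fderiv ℝ W (ρ • unitC φ)) (ρ • unitC φ) :=
      (W_diffAt hW (mem_S (hρmem ρ hρ) φ)).hasFDerivAt
    exact (h2.comp_hasDerivAt ρ h1).const_smul (ψ φ)

lemma unitC_periodic : unitC (2*π) = unitC 0 := by
  simp [unitC, Real.cos_two_pi, Real.sin_two_pi]

/-- Tangential integration-by-parts lemma. -/
lemma tangential_zero (hW : ContDiffOn ℝ 1 W (ball (0:R2) 1 \ {0}))
    {r : ℝ} (hr : r ∈ Ioo (0:ℝ) 1)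
    (hcosW : (∫ φ in (0:ℝ)..(2*π), Real.cos φ • W (r • unitC φ)) = 0)
    (hsinW : (∫ φ in (0:ℝ)..(2*π), Real.sin φ • W (r • unitC φ)) = 0)
    (hcosD : (∫ φ in (0:ℝ)..(2*π),
      Real.cos φ • (fderiv ℝ W (r • unitC φ) (unitC φ))) = 0)
    (hsinD : (∫ φ in (0:ℝ)..(2*π),
      Real.sin φ • (fderiv ℝ W (r • unitC φ) (unitC φ))) = 0) :
    (∫ φ in (0:ℝ)..(2*π), fderiv ℝ W (r • unitC φ) e1) = 0 ∧
    (∫ φ in (0:ℝ)..(2*π), fderiv ℝ W (r • unitC φ) e2) = 0 := by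
  set h : ℝ → Fin 2 → ℝ := fun φ => W (r • unitC φ) with hh
  set D' : ℝ → Fin 2 → ℝ :=
    fun φ => fderiv ℝ W (r • unitC φ) ((-Real.sin φ) • e1 + Real.cos φ • e2) with hD'
  set Du : ℝ → Fin 2 → ℝ := fun φ => fderiv ℝ W (r • unitC φ) (unitC φ) with hDu
  have hcont_h : Continuous h :=
    (W_contOn hW).comp_continuous (continuous_unitC.const_smul r) (mem_S hr)
  have hcont_fd : Continuous fun φ => fderiv ℝ W (r • unitC φ) :=
    (fderiv_contOn hW).comp_continuous (continuous_unitC.const_smul r) (mem_S hr)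
  have hcont_D' : Continuous D' :=
    hcont_fd.clm_apply
      ((continuous_neg.comp Real.continuous_sin).smul continuous_const |>.add
        (Real.continuous_cos.smul continuous_const))
  have hcont_Du : Continuous Du := hcont_fd.clm_apply continuous_unitC
  have hderiv_h : ∀ φ, HasDerivAt h (r • D' φ) φ := by
    intro φ
    have h1 : HasDerivAt (fun φ => r • unitC φ)
        (r • ((-Real.sin φ) • e1 + Real.cos φ • e2)) φ :=
      (hasDerivAt_unitC φ).const_smul r
    have h2 : HasFDerivAt W (fderiv ℝ W (r • unitC φ)) (r • unitC φ) :=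
      (W_diffAt hW (mem_S hr φ)).hasFDerivAt
    have := h2.comp_hasDerivAt φ h1
    exact this.congr_deriv (by simp only [hD', _root_.map_smul])
  have hG1 : ∀ φ ∈ uIcc (0:ℝ) (2*π), HasDerivAt (fun φ => Real.sin φ • h φ)
      (Real.cos φ • h φ + Real.sin φ • (r • D' φ)) φ := by
    intro φ _
    exact ((Real.hasDerivAt_sin φ).smul (hderiv_h φ)).congr_deriv (add_comm _ _)
  have hint1 : IntervalIntegrable
      (fun φ => Real.cos φ • h φ + Real.sin φ • (r • D' φ)) volume 0 (2*π) :=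
    ((Real.continuous_cos.smul hcont_h).add
      (Real.continuous_sin.smul (hcont_D'.const_smul r))).intervalIntegrable _ _
  have hFTC1 := intervalIntegral.integral_eq_sub_of_hasDerivAt hG1 hint1
  rw [Real.sin_two_pi, Real.sin_zero, zero_smul, zero_smul, sub_zero] at hFTC1
  have hintA : IntervalIntegrable (fun φ => Real.cos φ • h φ) volume 0 (2*π) :=
    (Real.continuous_cos.smul hcont_h).intervalIntegrable _ _
  have hintB : IntervalIntegrable (fun φ => Real.sin φ • (r • D' φ)) volume 0 (2*π) :=
    (Real.continuous_sin.smul (hcont_D'.const_smul r)).intervalIntegrable _ _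
  rw [intervalIntegral.integral_add hintA hintB, hcosW, zero_add] at hFTC1
  have hsinD' : (∫ φ in (0:ℝ)..(2*π), Real.sin φ • D' φ) = 0 := by
    have : (fun φ => Real.sin φ • (r • D' φ)) = fun φ => r • (Real.sin φ • D' φ) := by
      funext φ; rw [smul_comm]
    rw [this, intervalIntegral.integral_smul] at hFTC1
    exact (smul_eq_zero.mp hFTC1).resolve_left (ne_of_gt hr.1)
  have hG2 : ∀ φ ∈ uIcc (0:ℝ) (2*π), HasDerivAt (fun φ => Real.cos φ • h φ)
      ((-Real.sin φ) • h φ + Real.cos φ • (r • D' φ)) φ := by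
    intro φ _
    exact ((Real.hasDerivAt_cos φ).smul (hderiv_h φ)).congr_deriv (add_comm _ _)
  have hint2 : IntervalIntegrable
      (fun φ => (-Real.sin φ) • h φ + Real.cos φ • (r • D' φ)) volume 0 (2*π) :=
    (((continuous_neg.comp Real.continuous_sin).smul hcont_h).add
      (Real.continuous_cos.smul (hcont_D'.const_smul r))).intervalIntegrable _ _
  have hFTC2 := intervalIntegral.integral_eq_sub_of_hasDerivAt hG2 hint2
  have hper : h (2*π) = h 0 := by rw [hh]; simp [unitC_periodic]
  rw [Real.cos_two_pi, Real.cos_zero, hper, sub_self] at hFTC2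
  have hintA2 : IntervalIntegrable (fun φ => (-Real.sin φ) • h φ) volume 0 (2*π) :=
    ((continuous_neg.comp Real.continuous_sin).smul hcont_h).intervalIntegrable _ _
  have hintB2 : IntervalIntegrable (fun φ => Real.cos φ • (r • D' φ)) volume 0 (2*π) :=
    (Real.continuous_cos.smul (hcont_D'.const_smul r)).intervalIntegrable _ _
  rw [intervalIntegral.integral_add hintA2 hintB2] at hFTC2
  have hnegsin : (∫ φ in (0:ℝ)..(2*π), (-Real.sin φ) • h φ) = 0 := by
    have : (fun φ => (-Real.sin φ) • h φ) = fun φ => -(Real.sin φ • h φ) := by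
      funext φ; rw [neg_smul]
    rw [this, intervalIntegral.integral_neg, hsinW, neg_zero]
  rw [hnegsin, zero_add] at hFTC2
  have hcosD' : (∫ φ in (0:ℝ)..(2*π), Real.cos φ • D' φ) = 0 := by
    have : (fun φ => Real.cos φ • (r • D' φ)) = fun φ => r • (Real.cos φ • D' φ) := by
      funext φ; rw [smul_comm]
    rw [this, intervalIntegral.integral_smul] at hFTC2
    exact (smul_eq_zero.mp hFTC2).resolve_left (ne_of_gt hr.1)
  have he1 : ∀ φ, fderiv ℝ W (r • unitC φ) e1
      = Real.cos φ • Du φ - Real.sin φ • D' φ := by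
    intro φ
    have hid : e1 = Real.cos φ • unitC φ
        - Real.sin φ • ((-Real.sin φ) • e1 + Real.cos φ • e2) := by
      rw [unitC_eq φ]
      have hpyth := Real.sin_sq_add_cos_sq φ
      ext i
      fin_cases i <;>
        · simp [e1, e2, EuclideanSpace.single_apply, PiLp.add_apply, PiLp.sub_apply,
            PiLp.smul_apply, smul_eq_mul]
          nlinarith [hpyth]
    conv_lhs => rw [hid]
    simp only [map_sub, map_add, _root_.map_smul, hDu, hD', unitC_eq]
  have he2 : ∀ φ, fderiv ℝ W (r • unitC φ) e2
      = Real.sin φ • Du φ + Real.cos φ • D' φ := by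
    intro φ
    have hid : e2 = Real.sin φ • unitC φ
        + Real.cos φ • ((-Real.sin φ) • e1 + Real.cos φ • e2) := by
      rw [unitC_eq φ]
      have hpyth := Real.sin_sq_add_cos_sq φ
      ext i
      fin_cases i <;>
        · simp [e1, e2, EuclideanSpace.single_apply, PiLp.add_apply,
            PiLp.smul_apply, smul_eq_mul]
          nlinarith [hpyth]
    conv_lhs => rw [hid]
    simp only [map_sub, map_add, _root_.map_smul, hDu, hD', unitC_eq]
  have hintcosDu : IntervalIntegrable (fun φ => Real.cos φ • Du φ) volume 0 (2*π) :=
    (Real.continuous_cos.smul hcont_Du).intervalIntegrable _ _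
  have hintsinDu : IntervalIntegrable (fun φ => Real.sin φ • Du φ) volume 0 (2*π) :=
    (Real.continuous_sin.smul hcont_Du).intervalIntegrable _ _
  have hintsinD' : IntervalIntegrable (fun φ => Real.sin φ • D' φ) volume 0 (2*π) :=
    (Real.continuous_sin.smul hcont_D').intervalIntegrable _ _
  have hintcosD' : IntervalIntegrable (fun φ => Real.cos φ • D' φ) volume 0 (2*π) :=
    (Real.continuous_cos.smul hcont_D').intervalIntegrable _ _
  constructor
  · calc (∫ φ in (0:ℝ)..(2*π), fderiv ℝ W (r • unitC φ) e1)
        = ∫ φ in (0:ℝ)..(2*π), (Real.cos φ • Du φ - Real.sin φ • D' φ) :=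
          intervalIntegral.integral_congr fun φ _ => he1 φ
      _ = (∫ φ in (0:ℝ)..(2*π), Real.cos φ • Du φ)
            - ∫ φ in (0:ℝ)..(2*π), Real.sin φ • D' φ :=
          intervalIntegral.integral_sub hintcosDu hintsinD'
      _ = 0 := by rw [hcosD, hsinD', sub_zero]
  · calc (∫ φ in (0:ℝ)..(2*π), fderiv ℝ W (r • unitC φ) e2)
        = ∫ φ in (0:ℝ)..(2*π), (Real.sin φ • Du φ + Real.cos φ • D' φ) :=
          intervalIntegral.integral_congr fun φ _ => he2 φ
      _ = (∫ φ in (0:ℝ)..(2*π), Real.sin φ • Du φ)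
            + ∫ φ in (0:ℝ)..(2*π), Real.cos φ • D' φ :=
          intervalIntegral.integral_add hintsinDu hintcosD'
      _ = 0 := by rw [hsinD, hcosD', add_zero]

end Wlemmas

lemma mean_est {f g : ℝ → Fin 2 → ℝ} {B : ℝ → ℝ}
    (hg_cont : Continuous g) (hg0 : (∫ φ in (0:ℝ)..(2*π), g φ) = 0)
    (hf_meas : AEStronglyMeasurable f (volume.restrict (Set.uIoc (0:ℝ) (2*π))))
    (hB_cont : Continuous B)
    (hbound : ∀ φ, ‖f φ - g φ‖ ≤ B φ) :
    ‖(2*π)⁻¹ • ∫ φ in (0:ℝ)..(2*π), f φ‖ ≤ (2*π)⁻¹ * ∫ φ in (0:ℝ)..(2*π), B φ := by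
  have h2π : (0:ℝ) ≤ 2*π := by positivity
  have hBint : IntervalIntegrable B volume 0 (2*π) := hB_cont.intervalIntegrable _ _
  have herr_meas : AEStronglyMeasurable (fun φ => f φ - g φ)
      (volume.restrict (Set.uIoc (0:ℝ) (2*π))) := hf_meas.sub hg_cont.aestronglyMeasurable
  have herr : IntervalIntegrable (fun φ => f φ - g φ) volume 0 (2*π) := by
    refine hBint.mono_fun herr_meas (Eventually.of_forall fun φ => ?_)
    exact (hbound φ).trans (le_abs_self _)
  have hfint : IntervalIntegrable f volume 0 (2*π) := by
    have : f = fun φ => (f φ - g φ) + g φ := by funext φ; abel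
    rw [this]; exact herr.add (hg_cont.intervalIntegrable _ _)
  have hsplit : (∫ φ in (0:ℝ)..(2*π), f φ) = ∫ φ in (0:ℝ)..(2*π), (f φ - g φ) := by
    rw [intervalIntegral.integral_sub hfint (hg_cont.intervalIntegrable _ _), hg0, sub_zero]
  rw [hsplit, norm_smul, Real.norm_eq_abs, abs_of_pos (by positivity)]
  refine mul_le_mul_of_nonneg_left ?_ (by positivity)
  calc ‖∫ φ in (0:ℝ)..(2*π), (f φ - g φ)‖
      ≤ ∫ φ in (0:ℝ)..(2*π), ‖f φ - g φ‖ :=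
        intervalIntegral.norm_integral_le_integral_norm h2π
    _ ≤ ∫ φ in (0:ℝ)..(2*π), B φ :=
        intervalIntegral.integral_mono_on h2π herr.norm hBint (fun φ _ => hbound φ)

lemma err_bound {t0 t1 : ℝ} (ht0 : |t0| ≤ 1) (ht1 : |t1| ≤ 1)
    {P Q R S : Matrix (Fin 2) (Fin 2) ℝ} {c : ℝ}
    (hP : ‖P‖ ≤ c) (hQ : ‖Q‖ ≤ c) (hR : ‖R‖ ≤ c) (hS : ‖S‖ ≤ c)
    {vx vy : Fin 2 → ℝ} {N : ℝ} (hvx : ‖vx‖ ≤ N) (hvy : ‖vy‖ ≤ N) :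
    ‖t0 • (P.mulVec vx + Q.mulVec vy) + t1 • (R.mulVec vx + S.mulVec vy)‖
      ≤ 8 * c * N := by
  have hc : 0 ≤ c := (norm_nonneg _).trans hP
  have hN : 0 ≤ N := (norm_nonneg _).trans hvx
  have key : ∀ (t : ℝ), |t| ≤ 1 → ∀ M M' : Matrix (Fin 2) (Fin 2) ℝ,
      ‖M‖ ≤ c → ‖M'‖ ≤ c → ‖t • (M.mulVec vx + M'.mulVec vy)‖ ≤ 4 * c * N := by
    intro t ht M M' hM hM'
    rw [norm_smul, Real.norm_eq_abs]
    calc |t| * ‖M.mulVec vx + M'.mulVec vy‖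
        ≤ 1 * (‖M.mulVec vx‖ + ‖M'.mulVec vy‖) :=
          mul_le_mul ht (norm_add_le _ _) (norm_nonneg _) zero_le_one
      _ ≤ 1 * (2 * ‖M‖ * ‖vx‖ + 2 * ‖M'‖ * ‖vy‖) := by
          refine mul_le_mul_of_nonneg_left (add_le_add (mulVec_norm_le _ _)
            (mulVec_norm_le _ _)) zero_le_one
      _ ≤ 4 * c * N := by
          have h1 : 2 * ‖M‖ * ‖vx‖ ≤ 2 * c * N := by
            have := mul_le_mul (mul_le_mul_of_nonneg_left hM (by norm_num : (0:ℝ) ≤ 2))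
              hvx (norm_nonneg _) (by positivity)
            linarith
          have h2 : 2 * ‖M'‖ * ‖vy‖ ≤ 2 * c * N := by
            have := mul_le_mul (mul_le_mul_of_nonneg_left hM' (by norm_num : (0:ℝ) ≤ 2))
              hvy (norm_nonneg _) (by positivity)
            linarith
          linarith
  calc ‖t0 • (P.mulVec vx + Q.mulVec vy) + t1 • (R.mulVec vx + S.mulVec vy)‖
      ≤ ‖t0 • (P.mulVec vx + Q.mulVec vy)‖ + ‖t1 • (R.mulVec vx + S.mulVec vy)‖ :=
        norm_add_le _ _
    _ ≤ 4 * c * N + 4 * c * N := add_le_add (key t0 ht0 P Q hP hQ) (key t1 ht1 R S hR hS)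
    _ = 8 * c * N := by ring

/-- Estimates for circle means of matrix coefficients against the gradient of a function
`W` with vanishing spherical mean and first spherical moments. -/
theorem statement12 :
    ∃ C > (0:ℝ), ∀ ω : ℝ → ℝ, ModCont ω →
      ∀ A : Fin 2 → Fin 2 → R2 → Matrix (Fin 2) (Fin 2) ℝ,
        (∀ i j k l, Measurable fun x => A i j x k l) →
        (∀ i j, ∀ x : R2, 0 < ‖x‖ → ‖x‖ < 1 →
          ‖A i j x - (if i = j then (1 : Matrix (Fin 2) (Fin 2) ℝ) else 0)‖ ≤ ω ‖x‖) →
        ∀ W : R2 → Fin 2 → ℝ, ContDiffOn ℝ 1 W (ball (0:R2) 1 \ {0}) →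
          (∀ r ∈ Ioo (0:ℝ) 1,
            (∫ φ in (0:ℝ)..(2 * π), W (r • unitC φ)) = 0 ∧
            ∀ k : Fin 2, (∫ φ in (0:ℝ)..(2 * π), θc φ k • W (r • unitC φ)) = 0) →
          ∀ r ∈ Ioo (0:ℝ) 1,
            (‖(2 * π)⁻¹ • ∫ φ in (0:ℝ)..(2 * π),
                ∑ i, θc φ i •
                  ((A i 0 (r • unitC φ)).mulVec (fderiv ℝ W (r • unitC φ) e1)
                    + (A i 1 (r • unitC φ)).mulVec (fderiv ℝ W (r • unitC φ) e2))‖ ≤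
              C * ω r * ((2 * π)⁻¹ * ∫ φ in (0:ℝ)..(2 * π), ‖fderiv ℝ W (r • unitC φ)‖)) ∧
            (∀ k : Fin 2, ‖(2 * π)⁻¹ • ∫ φ in (0:ℝ)..(2 * π),
                ∑ i, ∑ j, (θc φ i * θc φ k) •
                  (A i j (r • unitC φ)).mulVec (fderiv ℝ W (r • unitC φ) (eV j))‖ ≤
              C * ω r * ((2 * π)⁻¹ * ∫ φ in (0:ℝ)..(2 * π), ‖fderiv ℝ W (r • unitC φ)‖)) ∧
            (∀ k : Fin 2, ‖(2 * π)⁻¹ • ∫ φ in (0:ℝ)..(2 * π),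
                ∑ i, (A k i (r • unitC φ)).mulVec (fderiv ℝ W (r • unitC φ) (eV i))‖ ≤
              C * ω r * ((2 * π)⁻¹ * ∫ φ in (0:ℝ)..(2 * π), ‖fderiv ℝ W (r • unitC φ)‖)) := by
  refine ⟨100, by norm_num, ?_⟩
  intro ω hmod A hAmeas hAosc W hW hmom r hr
  have hω0 : 0 ≤ ω r := by
    have h0 : (0:ℝ) ∈ Ico (0:ℝ) 1 := ⟨le_refl _, one_pos⟩
    have hrI : r ∈ Ico (0:ℝ) 1 := ⟨hr.1.le, hr.2⟩
    have := hmod.2.1 h0 hrI hr.1.le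
    rw [hmod.2.2] at this
    exact this
  have hxnorm : ∀ φ : ℝ, ‖r • unitC φ‖ = r := fun φ => by
    rw [norm_smul_unitC, abs_of_pos hr.1]
  have hE : ∀ i j (φ : ℝ),
      ‖A i j (r • unitC φ) - (if i = j then (1 : Matrix (Fin 2) (Fin 2) ℝ) else 0)‖ ≤ ω r := by
    intro i j φ
    have := hAosc i j (r • unitC φ) (by rw [hxnorm]; exact hr.1) (by rw [hxnorm]; exact hr.2)
    rwa [hxnorm] at this
  have hE00 : ∀ φ : ℝ, ‖A 0 0 (r • unitC φ) - 1‖ ≤ ω r := fun φ => by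
    simpa using hE 0 0 φ
  have hE01 : ∀ φ : ℝ, ‖A 0 1 (r • unitC φ) - 0‖ ≤ ω r := fun φ => by
    simpa using hE 0 1 φ
  have hE10 : ∀ φ : ℝ, ‖A 1 0 (r • unitC φ) - 0‖ ≤ ω r := fun φ => by
    simpa using hE 1 0 φ
  have hE11 : ∀ φ : ℝ, ‖A 1 1 (r • unitC φ) - 1‖ ≤ ω r := fun φ => by
    simpa using hE 1 1 φ
  -- continuity infrastructure
  have hcont_fd : Continuous fun φ => fderiv ℝ W (r • unitC φ) :=
    (fderiv_contOn hW).comp_continuous (continuous_unitC.const_smul r) (mem_S hr)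
  have hcDx : Continuous fun φ => fderiv ℝ W (r • unitC φ) e1 :=
    hcont_fd.clm_apply continuous_const
  have hcDy : Continuous fun φ => fderiv ℝ W (r • unitC φ) e2 :=
    hcont_fd.clm_apply continuous_const
  have hcDu : Continuous fun φ => fderiv ℝ W (r • unitC φ) (unitC φ) :=
    hcont_fd.clm_apply continuous_unitC
  have hDxN : ∀ φ : ℝ, ‖fderiv ℝ W (r • unitC φ) e1‖ ≤ ‖fderiv ℝ W (r • unitC φ)‖ := by
    intro φ
    have := (fderiv ℝ W (r • unitC φ)).le_opNorm e1
    rwa [norm_e1, mul_one] at this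
  have hDyN : ∀ φ : ℝ, ‖fderiv ℝ W (r • unitC φ) e2‖ ≤ ‖fderiv ℝ W (r • unitC φ)‖ := by
    intro φ
    have := (fderiv ℝ W (r • unitC φ)).le_opNorm e2
    rwa [norm_e2, mul_one] at this
  -- vanishing circle means of derivatives
  have hrad1 : (∫ φ in (0:ℝ)..(2*π), fderiv ℝ W (r • unitC φ) (unitC φ)) = 0 := by
    have := radial_zero hW (fun _ => 1) continuous_const (fun φ => by norm_num)
      (fun ρ hρ => by simpa using (hmom ρ hρ).1) hr
    simpa using this
  have hradc : (∫ φ in (0:ℝ)..(2*π),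
      Real.cos φ • fderiv ℝ W (r • unitC φ) (unitC φ)) = 0 :=
    radial_zero hW Real.cos Real.continuous_cos (fun φ => Real.abs_cos_le_one φ)
      (fun ρ hρ => by
        have := (hmom ρ hρ).2 0
        simpa only [θc, Matrix.cons_val_zero] using this) hr
  have hrads : (∫ φ in (0:ℝ)..(2*π),
      Real.sin φ • fderiv ℝ W (r • unitC φ) (unitC φ)) = 0 :=
    radial_zero hW Real.sin Real.continuous_sin (fun φ => Real.abs_sin_le_one φ)
      (fun ρ hρ => by
        have := (hmom ρ hρ).2 1
        simpa only [θc, Matrix.cons_val_one, Matrix.head_cons, Matrix.cons_val_zero] using this) hr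
  have hcosW : (∫ φ in (0:ℝ)..(2*π), Real.cos φ • W (r • unitC φ)) = 0 := by
    have := (hmom r hr).2 0
    simpa only [θc, Matrix.cons_val_zero] using this
  have hsinW : (∫ φ in (0:ℝ)..(2*π), Real.sin φ • W (r • unitC φ)) = 0 := by
    have := (hmom r hr).2 1
    simpa only [θc, Matrix.cons_val_one, Matrix.head_cons, Matrix.cons_val_zero] using this
  have htan := tangential_zero hW hr hcosW hsinW hradc hrads
  -- decomposition of Du(unitC φ)
  have hDuu : ∀ φ : ℝ, fderiv ℝ W (r • unitC φ) (unitC φ)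
      = Real.cos φ • fderiv ℝ W (r • unitC φ) e1
        + Real.sin φ • fderiv ℝ W (r • unitC φ) e2 := by
    intro φ
    have h := congrArg (fderiv ℝ W (r • unitC φ)) (unitC_eq φ)
    rwa [map_add, _root_.map_smul, _root_.map_smul] at h
  -- measurability helper
  have hMv : ∀ i j, ∀ v : ℝ → Fin 2 → ℝ, Continuous v →
      Measurable (fun φ => (A i j (r • unitC φ)).mulVec (v φ)) := by
    intro i j v hv
    rw [measurable_pi_iff]
    intro k
    have heq : (fun φ => (A i j (r • unitC φ)).mulVec (v φ) k)
        = fun φ => A i j (r • unitC φ) k 0 * v φ 0 + A i j (r • unitC φ) k 1 * v φ 1 := by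
      funext φ; simp [Matrix.mulVec, dotProduct, Fin.sum_univ_two]
    rw [heq]
    have hm : Measurable fun φ : ℝ => r • unitC φ :=
      (continuous_unitC.const_smul r).measurable
    exact (((hAmeas i j k 0).comp hm).mul ((continuous_apply 0).comp hv).measurable).add
      (((hAmeas i j k 1).comp hm).mul ((continuous_apply 1).comp hv).measurable)
  -- final wrapper
  have final : ∀ f g : ℝ → Fin 2 → ℝ,
      Continuous g → (∫ φ in (0:ℝ)..(2*π), g φ) = 0 →
      AEStronglyMeasurable f (volume.restrict (Set.uIoc (0:ℝ) (2*π))) →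
      (∀ φ, ‖f φ - g φ‖ ≤ 8 * ω r * ‖fderiv ℝ W (r • unitC φ)‖) →
      ‖(2*π)⁻¹ • ∫ φ in (0:ℝ)..(2*π), f φ‖ ≤
        100 * ω r * ((2*π)⁻¹ * ∫ φ in (0:ℝ)..(2*π), ‖fderiv ℝ W (r • unitC φ)‖) := by
    intro f g hgc hg0 hfm hb
    have hBc : Continuous fun φ => 8 * ω r * ‖fderiv ℝ W (r • unitC φ)‖ :=
      continuous_const.mul hcont_fd.norm
    have hNnn : 0 ≤ ∫ φ in (0:ℝ)..(2*π), ‖fderiv ℝ W (r • unitC φ)‖ :=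
      intervalIntegral.integral_nonneg (by positivity) (fun _ _ => norm_nonneg _)
    calc ‖(2*π)⁻¹ • ∫ φ in (0:ℝ)..(2*π), f φ‖
        ≤ (2*π)⁻¹ * ∫ φ in (0:ℝ)..(2*π), 8 * ω r * ‖fderiv ℝ W (r • unitC φ)‖ :=
          mean_est hgc hg0 hfm hBc hb
      _ = 8 * ω r * ((2*π)⁻¹ * ∫ φ in (0:ℝ)..(2*π), ‖fderiv ℝ W (r • unitC φ)‖) := by
          rw [intervalIntegral.integral_const_mul]; ring
      _ ≤ 100 * ω r * ((2*π)⁻¹ * ∫ φ in (0:ℝ)..(2*π), ‖fderiv ℝ W (r • unitC φ)‖) := by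
          have hpos : 0 ≤ (2*π)⁻¹ * ∫ φ in (0:ℝ)..(2*π), ‖fderiv ℝ W (r • unitC φ)‖ := by
            have : (0:ℝ) ≤ (2*π)⁻¹ := by positivity
            exact mul_nonneg this hNnn
          nlinarith [hω0, hpos]
  refine ⟨?_, ?_, ?_⟩
  · -- first estimate
    refine final _ (fun φ => fderiv ℝ W (r • unitC φ) (unitC φ)) hcDu hrad1 ?_ ?_
    · have : Measurable fun φ => ∑ i, θc φ i •
          ((A i 0 (r • unitC φ)).mulVec (fderiv ℝ W (r • unitC φ) e1)
            + (A i 1 (r • unitC φ)).mulVec (fderiv ℝ W (r • unitC φ) e2)) := by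
        refine Finset.measurable_sum _ fun i _ => ?_
        have hθ : Measurable fun φ => θc φ i := by
          fin_cases i
          · simpa [θc] using Real.continuous_cos.measurable
          · simpa [θc] using Real.continuous_sin.measurable
        exact hθ.smul ((hMv i 0 _ hcDx).add (hMv i 1 _ hcDy))
      exact this.aestronglyMeasurable
    · intro φ
      have hid : (∑ i, θc φ i •
            ((A i 0 (r • unitC φ)).mulVec (fderiv ℝ W (r • unitC φ) e1)
              + (A i 1 (r • unitC φ)).mulVec (fderiv ℝ W (r • unitC φ) e2)))
          - fderiv ℝ W (r • unitC φ) (unitC φ)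
          = Real.cos φ • ((A 0 0 (r • unitC φ) - 1).mulVec (fderiv ℝ W (r • unitC φ) e1)
              + (A 0 1 (r • unitC φ) - 0).mulVec (fderiv ℝ W (r • unitC φ) e2))
            + Real.sin φ • ((A 1 0 (r • unitC φ) - 0).mulVec (fderiv ℝ W (r • unitC φ) e1)
              + (A 1 1 (r • unitC φ) - 1).mulVec (fderiv ℝ W (r • unitC φ) e2)) := by
        rw [hDuu φ]
        simp only [Fin.sum_univ_two, Matrix.sub_mulVec, Matrix.one_mulVec, Matrix.zero_mulVec,
          θc, Matrix.cons_val_zero, Matrix.cons_val_one, Matrix.head_cons]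
        module
      rw [hid]
      exact err_bound (Real.abs_cos_le_one φ) (Real.abs_sin_le_one φ)
        (hE00 φ) (hE01 φ) (hE10 φ) (hE11 φ) (hDxN φ) (hDyN φ)
  · -- second estimate
    intro k
    have hθk1 : ∀ φ : ℝ, |θc φ k| ≤ 1 := by
      intro φ; fin_cases k
      · simpa [θc] using Real.abs_cos_le_one φ
      · simpa [θc] using Real.abs_sin_le_one φ
    have hcθk : Continuous fun φ => θc φ k := by
      fin_cases k
      · simpa [θc] using Real.continuous_cos
      · simpa [θc] using Real.continuous_sin
    have hg0 : (∫ φ in (0:ℝ)..(2*π), θc φ k • fderiv ℝ W (r • unitC φ) (unitC φ)) = 0 := by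
      fin_cases k
      · simpa only [θc, Fin.zero_eta, Matrix.cons_val_zero] using hradc
      · simpa only [θc, Fin.mk_one, Matrix.cons_val_one, Matrix.head_cons, Matrix.cons_val_zero] using hrads
    refine final _ (fun φ => θc φ k • fderiv ℝ W (r • unitC φ) (unitC φ))
      (hcθk.smul hcDu) hg0 ?_ ?_
    · have : Measurable fun φ => ∑ i, ∑ j, (θc φ i * θc φ k) •
          (A i j (r • unitC φ)).mulVec (fderiv ℝ W (r • unitC φ) (eV j)) := by
        refine Finset.measurable_sum _ fun i _ => Finset.measurable_sum _ fun j _ => ?_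
        have hθ : Measurable fun φ => θc φ i * θc φ k := by
          have h1 : ∀ l : Fin 2, Measurable fun φ => θc φ l := by
            intro l; fin_cases l
            · simpa [θc] using Real.continuous_cos.measurable
            · simpa [θc] using Real.continuous_sin.measurable
          exact (h1 i).mul (h1 k)
        have hcv : Continuous fun φ => fderiv ℝ W (r • unitC φ) (eV j) :=
          hcont_fd.clm_apply continuous_const
        exact hθ.smul (hMv i j _ hcv)
      exact this.aestronglyMeasurable
    · intro φ
      have hid : (∑ i, ∑ j, (θc φ i * θc φ k) •
            (A i j (r • unitC φ)).mulVec (fderiv ℝ W (r • unitC φ) (eV j)))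
          - θc φ k • fderiv ℝ W (r • unitC φ) (unitC φ)
          = (θc φ 0 * θc φ k) •
              ((A 0 0 (r • unitC φ) - 1).mulVec (fderiv ℝ W (r • unitC φ) e1)
                + (A 0 1 (r • unitC φ) - 0).mulVec (fderiv ℝ W (r • unitC φ) e2))
            + (θc φ 1 * θc φ k) •
              ((A 1 0 (r • unitC φ) - 0).mulVec (fderiv ℝ W (r • unitC φ) e1)
                + (A 1 1 (r • unitC φ) - 1).mulVec (fderiv ℝ W (r • unitC φ) e2)) := by
        rw [hDuu φ]
        simp only [Fin.sum_univ_two, Matrix.sub_mulVec, Matrix.one_mulVec, Matrix.zero_mulVec,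
          eV, θc, Matrix.cons_val_zero, Matrix.cons_val_one, Matrix.head_cons]
        module
      rw [hid]
      have habs : ∀ l : Fin 2, |θc φ l * θc φ k| ≤ 1 := by
        intro l
        rw [abs_mul]
        have h1 : ∀ m : Fin 2, |θc φ m| ≤ 1 := by
          intro m; fin_cases m
          · simpa [θc] using Real.abs_cos_le_one φ
          · simpa [θc] using Real.abs_sin_le_one φ
        exact mul_le_one₀ (h1 l) (abs_nonneg _) (h1 k)
      exact err_bound (habs 0) (habs 1)
        (hE00 φ) (hE01 φ) (hE10 φ) (hE11 φ) (hDxN φ) (hDyN φ)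
  · -- third estimate
    intro k
    have hg0 : (∫ φ in (0:ℝ)..(2*π), fderiv ℝ W (r • unitC φ) (eV k)) = 0 := by
      fin_cases k
      · simpa [eV] using htan.1
      · simpa [eV] using htan.2
    have hcgk : Continuous fun φ => fderiv ℝ W (r • unitC φ) (eV k) :=
      hcont_fd.clm_apply continuous_const
    refine final _ (fun φ => fderiv ℝ W (r • unitC φ) (eV k)) hcgk hg0 ?_ ?_
    · have : Measurable fun φ => ∑ i,
          (A k i (r • unitC φ)).mulVec (fderiv ℝ W (r • unitC φ) (eV i)) := by
        refine Finset.measurable_sum _ fun i _ => ?_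
        have hcv : Continuous fun φ => fderiv ℝ W (r • unitC φ) (eV i) :=
          hcont_fd.clm_apply continuous_const
        exact hMv k i _ hcv
      exact this.aestronglyMeasurable
    · intro φ
      fin_cases k
      · refine le_trans (le_of_eq (congrArg norm ?_))
          (err_bound (t0 := 1) (t1 := 0) (by norm_num) (by norm_num)
            (hE00 φ) (hE01 φ) (hE10 φ) (hE11 φ) (hDxN φ) (hDyN φ))
        simp only [Fin.sum_univ_two, eV, Matrix.cons_val_zero, Matrix.cons_val_one,
          Matrix.head_cons, Matrix.sub_mulVec, Matrix.one_mulVec, Matrix.zero_mulVec,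
          Fin.isValue, Fin.mk_zero, Fin.mk_one]
        module
      · refine le_trans (le_of_eq (congrArg norm ?_))
          (err_bound (t0 := 1) (t1 := 0) (by norm_num) (by norm_num)
            (hE10 φ) (hE11 φ) (hE00 φ) (hE01 φ) (hDxN φ) (hDyN φ))
        simp only [Fin.sum_univ_two, eV, Matrix.cons_val_zero, Matrix.cons_val_one,
          Matrix.head_cons, Matrix.sub_mulVec, Matrix.one_mulVec, Matrix.zero_mulVec,
          Fin.isValue, Fin.mk_zero, Fin.mk_one]
        module
end
end

section
/- Let a, b, c : B₁(0) → ℝ be bounded measurable and let A₁₁ = [[a,0],[0,1]], A₂₁ = [[0,0],[a−1,b]], A₁₂ = [[b,c−1],[0,0]], A₂₂ = [[1,0],[0,c]]. For 0 < r < 1 define the 2×2 blocks ℬ_{kℓ}(r) = ⨍ A_{iℓ}(rθ) θ_i θ_k dφ (summation over i) and 𝒞_{kℓ}(r) = ⨍ A_{kℓ}(rθ) dφ, and let 𝐁(r), 𝐂(r) be the 4×4 matrices with (k,ℓ) block ℬ_{kℓ}(r), 𝒞_{kℓ}(r) respectively (k,ℓ ∈ {1,2}). Then the exact identity 𝐂(r)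 − 2𝐁(r) = R(r) holds for every r ∈ (0,1), where R(r) is the 4×4 matrix with rows (ā₁(r), 0, b̄₁(r), c̄₁(r)), (ā₂(r), b̄₂(r), 0, c̄₂(r)), (ā₂(r), 0, b̄₂(r), c̄₂(r)), (−ā₁(r), −b̄₁(r), 0, −c̄₁(r)). -/
open MeasureTheory Real Set Filter Metric intervalIntegral Matrix

noncomputable section

attribute [local instance] Matrix.normedAddCommGroup Matrix.normedSpace

/-- The 2×2 blocks `ℬ_{kℓ}(r) = ⨍ A_{iℓ}(rθ) θ_i θ_k dφ`. -/
def Bblk (a b c : R2 → ℝ) (r : ℝ) (k l : Fin 2) : Matrix (Fin 2) (Fin 2) ℝ :=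
  (2 * π)⁻¹ • ∫ φ in (0:ℝ)..(2 * π), ∑ i, (θc φ i * θc φ k) • Amat a b c i l (r • unitC φ)

/-- The 2×2 blocks `𝒞_{kℓ}(r) = ⨍ A_{kℓ}(rθ) dφ`. -/
def Cblk (a b c : R2 → ℝ) (r : ℝ) (k l : Fin 2) : Matrix (Fin 2) (Fin 2) ℝ :=
  (2 * π)⁻¹ • ∫ φ in (0:ℝ)..(2 * π), Amat a b c k l (r • unitC φ)

/-- Assembling four 2×2 blocks into a 4×4 matrix. -/
def blk4 (f : Fin 2 → Fin 2 → Matrix (Fin 2) (Fin 2) ℝ) : Matrix (Fin 4) (Fin 4) ℝ :=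
  Matrix.reindex finSumFinEquiv finSumFinEquiv
    (Matrix.fromBlocks (f 0 0) (f 0 1) (f 1 0) (f 1 1))

lemma myII {f : R2 → ℝ} {M r : ℝ} (hf : Measurable f)
    (hM : ∀ x : R2, ‖x‖ < 1 → |f x| ≤ M) (hr0 : 0 < r) (hr1 : r < 1)
    (g : ℝ → ℝ) (hg : Continuous g) :
    IntervalIntegrable (fun φ => f (r • unitC φ) * g φ) volume 0 (2 * π) := by
  obtain ⟨C, hC⟩ := (isCompact_uIcc (a := (0:ℝ)) (b := 2*π)).exists_bound_of_continuousOn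
    hg.continuousOn
  have hC0 : 0 ≤ C := le_trans (norm_nonneg (g 0)) (hC 0 left_mem_uIcc)
  have hM0 : 0 ≤ M := le_trans (abs_nonneg _) (hM 0 (by simp))
  refine (_root_.intervalIntegrable_const (c := M * C)).mono_fun ?_ ?_
  · exact ((hf.comp ((Continuous.smul (f := fun _ : ℝ => r) continuous_const continuous_unitC).measurable)).mul
      hg.measurable).aestronglyMeasurable
  · filter_upwards [ae_restrict_mem measurableSet_uIoc] with φ hφ
    have h1 : |f (r • unitC φ)| ≤ M := by
      refine hM _ ?_
      rw [norm_smul, norm_unitC, mul_one, Real.norm_eq_abs, abs_of_pos hr0]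
      exact hr1
    have h2 : |g φ| ≤ C := hC φ (uIoc_subset_uIcc hφ)
    rw [Real.norm_eq_abs, Real.norm_eq_abs, abs_mul]
    calc |f (r • unitC φ)| * |g φ| ≤ M * C :=
          mul_le_mul h1 h2 (abs_nonneg _) hM0
      _ ≤ |M * C| := le_abs_self _

instance matENAM : ENormedAddMonoid (Matrix (Fin 2) (Fin 2) ℝ) :=
  NormedAddCommGroup.toENormedAddCommMonoid.toENormedAddMonoid

lemma IIsmulc {f : ℝ → ℝ} {s t : ℝ} (hf : IntervalIntegrable f volume s t)
    (E : Matrix (Fin 2) (Fin 2) ℝ) :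
    IntervalIntegrable (fun x => f x • E) volume s t := by
  exact ⟨hf.1.smul_const E, hf.2.smul_const E⟩

def Mat00 : Matrix (Fin 2) (Fin 2) ℝ := !![1, 0; 0, 0]
def Mat01 : Matrix (Fin 2) (Fin 2) ℝ := !![0, 1; 0, 0]
def Mat10 : Matrix (Fin 2) (Fin 2) ℝ := !![0, 0; 1, 0]
def Mat11 : Matrix (Fin 2) (Fin 2) ℝ := !![0, 0; 0, 1]

lemma reindex_entry (X Y Z W : Matrix (Fin 2) (Fin 2) ℝ) :
    Matrix.reindex finSumFinEquiv finSumFinEquiv (Matrix.fromBlocks X Y Z W) =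
      !![X 0 0, X 0 1, Y 0 0, Y 0 1;
         X 1 0, X 1 1, Y 1 0, Y 1 1;
         Z 0 0, Z 0 1, W 0 0, W 0 1;
         Z 1 0, Z 1 1, W 1 0, W 1 1] := by
  ext i j
  fin_cases i <;> fin_cases j <;> rfl

lemma trig1 : (∫ φ in (0:ℝ)..(2*π), Real.cos φ ^ 2) = π := by
  rw [integral_cos_sq]; simp [Real.sin_two_pi, Real.cos_two_pi]

lemma trig2 : (∫ φ in (0:ℝ)..(2*π), Real.sin φ ^ 2) = π := by
  rw [integral_sin_sq]; simp [Real.sin_two_pi, Real.cos_two_pi]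

lemma trig3 : (∫ φ in (0:ℝ)..(2*π), Real.cos φ * Real.sin φ) = 0 := by
  rw [show (fun φ => Real.cos φ * Real.sin φ) = fun φ => Real.sin φ * Real.cos φ from
    funext fun φ => mul_comm _ _]
  rw [integral_sin_mul_cos₁]; simp [Real.sin_two_pi]

lemma trig0 : (∫ _ in (0:ℝ)..(2*π), (1:ℝ)) = 2 * π := by simp

set_option maxHeartbeats 1600000 in
/-- The exact identity `𝐂(r) - 2 𝐁(r) = R(r)`. -/
theorem statement18
    (a b c : R2 → ℝ) (ha : Measurable a) (hb : Measurable b) (hc : Measurable c)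
    (hbd : ∃ M : ℝ, ∀ x : R2, ‖x‖ < 1 → |a x| ≤ M ∧ |b x| ≤ M ∧ |c x| ≤ M) :
    ∀ r ∈ Ioo (0:ℝ) 1,
      blk4 (Cblk a b c r) - 2 • blk4 (Bblk a b c r) = Rmat a b c r := by
  obtain ⟨M, hM⟩ := hbd
  rintro r ⟨hr0, hr1⟩
  have hMa : ∀ x : R2, ‖x‖ < 1 → |a x| ≤ M := fun x hx => (hM x hx).1
  have hMb : ∀ x : R2, ‖x‖ < 1 → |b x| ≤ M := fun x hx => (hM x hx).2.1
  have hMc : ∀ x : R2, ‖x‖ < 1 → |c x| ≤ M := fun x hx => (hM x hx).2.2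
  -- scalar interval integrability of all atoms
  have hIa : IntervalIntegrable (fun φ => a (r • unitC φ)) volume 0 (2*π) := by
    simpa using myII ha hMa hr0 hr1 (fun _ => (1:ℝ)) continuous_const
  have hIb : IntervalIntegrable (fun φ => b (r • unitC φ)) volume 0 (2*π) := by
    simpa using myII hb hMb hr0 hr1 (fun _ => (1:ℝ)) continuous_const
  have hIc : IntervalIntegrable (fun φ => c (r • unitC φ)) volume 0 (2*π) := by
    simpa using myII hc hMc hr0 hr1 (fun _ => (1:ℝ)) continuous_const
  have hcc : Continuous fun φ : ℝ => Real.cos φ ^ 2 := by continuity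
  have hss : Continuous fun φ : ℝ => Real.sin φ ^ 2 := by continuity
  have hxx : Continuous fun φ : ℝ => Real.cos φ * Real.sin φ := by continuity
  have hIac := myII ha hMa hr0 hr1 _ hcc
  have hIas := myII ha hMa hr0 hr1 _ hss
  have hIax := myII ha hMa hr0 hr1 _ hxx
  have hIbc := myII hb hMb hr0 hr1 _ hcc
  have hIbs := myII hb hMb hr0 hr1 _ hss
  have hIbx := myII hb hMb hr0 hr1 _ hxx
  have hIcc := myII hc hMc hr0 hr1 _ hcc
  have hIcs := myII hc hMc hr0 hr1 _ hss
  have hIcx := myII hc hMc hr0 hr1 _ hxx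
  have hI1 : IntervalIntegrable (fun _ : ℝ => (1:ℝ)) volume 0 (2*π) :=
    _root_.intervalIntegrable_const
  have hIc2 : IntervalIntegrable (fun φ : ℝ => Real.cos φ ^ 2) volume 0 (2*π) :=
    hcc.intervalIntegrable _ _
  have hIs2 : IntervalIntegrable (fun φ : ℝ => Real.sin φ ^ 2) volume 0 (2*π) :=
    hss.intervalIntegrable _ _
  have hIx2 : IntervalIntegrable (fun φ : ℝ => Real.cos φ * Real.sin φ) volume 0 (2*π) :=
    hxx.intervalIntegrable _ _
  -- block values
  have hC00 : Cblk a b c r 0 0 = (2*π)⁻¹ •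
      ((∫ φ in (0:ℝ)..(2*π), a (r • unitC φ)) • Mat00 + (2*π) • Mat11) := by
    simp only [Cblk]
    rw [show (fun φ => Amat a b c 0 0 (r • unitC φ)) =
        fun φ => a (r • unitC φ) • Mat00 + (1:ℝ) • Mat11 from funext fun φ => by
      ext i j
      fin_cases i <;> fin_cases j <;>
        simp [Amat, A11, Mat00, Mat11] <;> try ring]
    rw [integral_add (IIsmulc hIa _) (IIsmulc hI1 _), intervalIntegral.integral_smul_const,
      intervalIntegral.integral_smul_const, trig0]
    try module
  have hC01 : Cblk a b c r 0 1 = (2*π)⁻¹ •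
      ((∫ φ in (0:ℝ)..(2*π), b (r • unitC φ)) • Mat00 +
       (∫ φ in (0:ℝ)..(2*π), c (r • unitC φ)) • Mat01 - (2*π) • Mat01) := by
    simp only [Cblk]
    rw [show (fun φ => Amat a b c 0 1 (r • unitC φ)) =
        fun φ => b (r • unitC φ) • Mat00 + c (r • unitC φ) • Mat01 + (1:ℝ) • (-Mat01) from
      funext fun φ => by
      ext i j
      fin_cases i <;> fin_cases j <;>
        simp [Amat, A12, Mat00, Mat01] <;> try ring]
    rw [integral_add ((IIsmulc hIb _).add (IIsmulc hIc _)) (IIsmulc hI1 _),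
      integral_add (IIsmulc hIb _) (IIsmulc hIc _), intervalIntegral.integral_smul_const,
      intervalIntegral.integral_smul_const, intervalIntegral.integral_smul_const, trig0]
    try module
  have hC10 : Cblk a b c r 1 0 = (2*π)⁻¹ •
      ((∫ φ in (0:ℝ)..(2*π), a (r • unitC φ)) • Mat10 +
       (∫ φ in (0:ℝ)..(2*π), b (r • unitC φ)) • Mat11 - (2*π) • Mat10) := by
    simp only [Cblk]
    rw [show (fun φ => Amat a b c 1 0 (r • unitC φ)) =
        fun φ => a (r • unitC φ) • Mat10 + b (r • unitC φ) • Mat11 + (1:ℝ) • (-Mat10) from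
      funext fun φ => by
      ext i j
      fin_cases i <;> fin_cases j <;>
        simp [Amat, A21, Mat10, Mat11] <;> try ring]
    rw [integral_add ((IIsmulc hIa _).add (IIsmulc hIb _)) (IIsmulc hI1 _),
      integral_add (IIsmulc hIa _) (IIsmulc hIb _), intervalIntegral.integral_smul_const,
      intervalIntegral.integral_smul_const, intervalIntegral.integral_smul_const, trig0]
    try module
  have hC11 : Cblk a b c r 1 1 = (2*π)⁻¹ •
      ((2*π) • Mat00 + (∫ φ in (0:ℝ)..(2*π), c (r • unitC φ)) • Mat11) := by
    simp only [Cblk]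
    rw [show (fun φ => Amat a b c 1 1 (r • unitC φ)) =
        fun φ => (1:ℝ) • Mat00 + c (r • unitC φ) • Mat11 from funext fun φ => by
      ext i j
      fin_cases i <;> fin_cases j <;>
        simp [Amat, A22, Mat00, Mat11] <;> try ring]
    rw [integral_add (IIsmulc hI1 _) (IIsmulc hIc _), intervalIntegral.integral_smul_const,
      intervalIntegral.integral_smul_const, trig0]
    try module
  have hB00 : Bblk a b c r 0 0 = (2*π)⁻¹ •
      ((∫ φ in (0:ℝ)..(2*π), a (r • unitC φ) * Real.cos φ ^ 2) • Mat00 +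
       (∫ φ in (0:ℝ)..(2*π), a (r • unitC φ) * (Real.cos φ * Real.sin φ)) • Mat10 +
       (∫ φ in (0:ℝ)..(2*π), b (r • unitC φ) * (Real.cos φ * Real.sin φ)) • Mat11 +
       π • Mat11) := by
    simp only [Bblk]
    rw [show (fun φ => ∑ i, (θc φ i * θc φ 0) • Amat a b c i 0 (r • unitC φ)) =
        fun φ => (a (r • unitC φ) * Real.cos φ ^ 2) • Mat00 +
          (a (r • unitC φ) * (Real.cos φ * Real.sin φ)) • Mat10 +
          (b (r • unitC φ) * (Real.cos φ * Real.sin φ)) • Mat11 +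
          (Real.cos φ ^ 2) • Mat11 + (Real.cos φ * Real.sin φ) • (-Mat10) from
      funext fun φ => by
      rw [Fin.sum_univ_two]
      ext i j
      fin_cases i <;> fin_cases j <;>
        simp [θc, Amat, A11, A21, Mat00, Mat10, Mat11] <;> try ring]
    rw [integral_add ((((IIsmulc hIac _).add (IIsmulc hIax _)).add (IIsmulc hIbx _)).add
        (IIsmulc hIc2 _)) (IIsmulc hIx2 _),
      integral_add (((IIsmulc hIac _).add (IIsmulc hIax _)).add (IIsmulc hIbx _))
        (IIsmulc hIc2 _),
      integral_add ((IIsmulc hIac _).add (IIsmulc hIax _)) (IIsmulc hIbx _),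
      integral_add (IIsmulc hIac _) (IIsmulc hIax _),
      intervalIntegral.integral_smul_const, intervalIntegral.integral_smul_const, intervalIntegral.integral_smul_const, intervalIntegral.integral_smul_const,
      intervalIntegral.integral_smul_const, trig1, trig3]
    try module
  have hB01 : Bblk a b c r 0 1 = (2*π)⁻¹ •
      ((∫ φ in (0:ℝ)..(2*π), b (r • unitC φ) * Real.cos φ ^ 2) • Mat00 +
       (∫ φ in (0:ℝ)..(2*π), c (r • unitC φ) * Real.cos φ ^ 2) • Mat01 - π • Mat01 +
       (∫ φ in (0:ℝ)..(2*π), c (r • unitC φ) * (Real.cos φ * Real.sin φ)) • Mat11) := by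
    simp only [Bblk]
    rw [show (fun φ => ∑ i, (θc φ i * θc φ 0) • Amat a b c i 1 (r • unitC φ)) =
        fun φ => (b (r • unitC φ) * Real.cos φ ^ 2) • Mat00 +
          (c (r • unitC φ) * Real.cos φ ^ 2) • Mat01 +
          (Real.cos φ ^ 2) • (-Mat01) + (Real.cos φ * Real.sin φ) • Mat00 +
          (c (r • unitC φ) * (Real.cos φ * Real.sin φ)) • Mat11 from
      funext fun φ => by
      rw [Fin.sum_univ_two]
      ext i j
      fin_cases i <;> fin_cases j <;>
        simp [θc, Amat, A12, A22, Mat00, Mat01, Mat11] <;> try ring]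
    rw [integral_add ((((IIsmulc hIbc _).add (IIsmulc hIcc _)).add (IIsmulc hIc2 _)).add
        (IIsmulc hIx2 _)) (IIsmulc hIcx _),
      integral_add (((IIsmulc hIbc _).add (IIsmulc hIcc _)).add (IIsmulc hIc2 _))
        (IIsmulc hIx2 _),
      integral_add ((IIsmulc hIbc _).add (IIsmulc hIcc _)) (IIsmulc hIc2 _),
      integral_add (IIsmulc hIbc _) (IIsmulc hIcc _),
      intervalIntegral.integral_smul_const, intervalIntegral.integral_smul_const, intervalIntegral.integral_smul_const, intervalIntegral.integral_smul_const,
      intervalIntegral.integral_smul_const, trig1, trig3]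
    try module
  have hB10 : Bblk a b c r 1 0 = (2*π)⁻¹ •
      ((∫ φ in (0:ℝ)..(2*π), a (r • unitC φ) * (Real.cos φ * Real.sin φ)) • Mat00 +
       (∫ φ in (0:ℝ)..(2*π), a (r • unitC φ) * Real.sin φ ^ 2) • Mat10 - π • Mat10 +
       (∫ φ in (0:ℝ)..(2*π), b (r • unitC φ) * Real.sin φ ^ 2) • Mat11) := by
    simp only [Bblk]
    rw [show (fun φ => ∑ i, (θc φ i * θc φ 1) • Amat a b c i 0 (r • unitC φ)) =
        fun φ => (a (r • unitC φ) * (Real.cos φ * Real.sin φ)) • Mat00 +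
          (Real.cos φ * Real.sin φ) • Mat11 +
          (a (r • unitC φ) * Real.sin φ ^ 2) • Mat10 +
          (Real.sin φ ^ 2) • (-Mat10) +
          (b (r • unitC φ) * Real.sin φ ^ 2) • Mat11 from
      funext fun φ => by
      rw [Fin.sum_univ_two]
      ext i j
      fin_cases i <;> fin_cases j <;>
        simp [θc, Amat, A11, A21, Mat00, Mat10, Mat11] <;> try ring]
    rw [integral_add ((((IIsmulc hIax _).add (IIsmulc hIx2 _)).add (IIsmulc hIas _)).add
        (IIsmulc hIs2 _)) (IIsmulc hIbs _),
      integral_add (((IIsmulc hIax _).add (IIsmulc hIx2 _)).add (IIsmulc hIas _))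
        (IIsmulc hIs2 _),
      integral_add ((IIsmulc hIax _).add (IIsmulc hIx2 _)) (IIsmulc hIas _),
      integral_add (IIsmulc hIax _) (IIsmulc hIx2 _),
      intervalIntegral.integral_smul_const, intervalIntegral.integral_smul_const, intervalIntegral.integral_smul_const, intervalIntegral.integral_smul_const,
      intervalIntegral.integral_smul_const, trig2, trig3]
    try module
  have hB11 : Bblk a b c r 1 1 = (2*π)⁻¹ •
      ((∫ φ in (0:ℝ)..(2*π), b (r • unitC φ) * (Real.cos φ * Real.sin φ)) • Mat00 +
       (∫ φ in (0:ℝ)..(2*π), c (r • unitC φ) * (Real.cos φ * Real.sin φ)) • Mat01 +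
       π • Mat00 +
       (∫ φ in (0:ℝ)..(2*π), c (r • unitC φ) * Real.sin φ ^ 2) • Mat11) := by
    simp only [Bblk]
    rw [show (fun φ => ∑ i, (θc φ i * θc φ 1) • Amat a b c i 1 (r • unitC φ)) =
        fun φ => (b (r • unitC φ) * (Real.cos φ * Real.sin φ)) • Mat00 +
          (c (r • unitC φ) * (Real.cos φ * Real.sin φ)) • Mat01 +
          (Real.cos φ * Real.sin φ) • (-Mat01) +
          (Real.sin φ ^ 2) • Mat00 +
          (c (r • unitC φ) * Real.sin φ ^ 2) • Mat11 from
      funext fun φ => by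
      rw [Fin.sum_univ_two]
      ext i j
      fin_cases i <;> fin_cases j <;>
        simp [θc, Amat, A12, A22, Mat00, Mat01, Mat11] <;> try ring]
    rw [integral_add ((((IIsmulc hIbx _).add (IIsmulc hIcx _)).add (IIsmulc hIx2 _)).add
        (IIsmulc hIs2 _)) (IIsmulc hIcs _),
      integral_add (((IIsmulc hIbx _).add (IIsmulc hIcx _)).add (IIsmulc hIx2 _))
        (IIsmulc hIs2 _),
      integral_add ((IIsmulc hIbx _).add (IIsmulc hIcx _)) (IIsmulc hIx2 _),
      integral_add (IIsmulc hIbx _) (IIsmulc hIcx _),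
      intervalIntegral.integral_smul_const, intervalIntegral.integral_smul_const, intervalIntegral.integral_smul_const, intervalIntegral.integral_smul_const,
      intervalIntegral.integral_smul_const, trig2, trig3]
    try module
  -- splitting relations
  have hJa : (∫ φ in (0:ℝ)..(2*π), a (r • unitC φ)) =
      (∫ φ in (0:ℝ)..(2*π), a (r • unitC φ) * Real.sin φ ^ 2) +
      (∫ φ in (0:ℝ)..(2*π), a (r • unitC φ) * Real.cos φ ^ 2) := by
    rw [← integral_add hIas hIac]
    refine integral_congr fun φ _ => ?_
    rw [← mul_add, Real.sin_sq_add_cos_sq, mul_one]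
  have hJb : (∫ φ in (0:ℝ)..(2*π), b (r • unitC φ)) =
      (∫ φ in (0:ℝ)..(2*π), b (r • unitC φ) * Real.sin φ ^ 2) +
      (∫ φ in (0:ℝ)..(2*π), b (r • unitC φ) * Real.cos φ ^ 2) := by
    rw [← integral_add hIbs hIbc]
    refine integral_congr fun φ _ => ?_
    rw [← mul_add, Real.sin_sq_add_cos_sq, mul_one]
  have hJc : (∫ φ in (0:ℝ)..(2*π), c (r • unitC φ)) =
      (∫ φ in (0:ℝ)..(2*π), c (r • unitC φ) * Real.sin φ ^ 2) +
      (∫ φ in (0:ℝ)..(2*π), c (r • unitC φ) * Real.cos φ ^ 2) := by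
    rw [← integral_add hIcs hIcc]
    refine integral_congr fun φ _ => ?_
    rw [← mul_add, Real.sin_sq_add_cos_sq, mul_one]
  -- abar1 rewrites
  have hA1a : abar1 a r = (2*π)⁻¹ *
      ((∫ φ in (0:ℝ)..(2*π), a (r • unitC φ) * Real.sin φ ^ 2) -
       (∫ φ in (0:ℝ)..(2*π), a (r • unitC φ) * Real.cos φ ^ 2)) := by
    rw [abar1, ← integral_sub hIas hIac]
    congr 1
    exact integral_congr fun φ _ => by ring
  have hA1b : abar1 b r = (2*π)⁻¹ *
      ((∫ φ in (0:ℝ)..(2*π), b (r • unitC φ) * Real.sin φ ^ 2) -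
       (∫ φ in (0:ℝ)..(2*π), b (r • unitC φ) * Real.cos φ ^ 2)) := by
    rw [abar1, ← integral_sub hIbs hIbc]
    congr 1
    exact integral_congr fun φ _ => by ring
  have hA1c : abar1 c r = (2*π)⁻¹ *
      ((∫ φ in (0:ℝ)..(2*π), c (r • unitC φ) * Real.sin φ ^ 2) -
       (∫ φ in (0:ℝ)..(2*π), c (r • unitC φ) * Real.cos φ ^ 2)) := by
    rw [abar1, ← integral_sub hIcs hIcc]
    congr 1
    exact integral_congr fun φ _ => by ring
  -- assemble
  simp only [blk4]
  rw [hC00, hC01, hC10, hC11, hB00, hB01, hB10, hB11, hJa, hJb, hJc,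
    reindex_entry, reindex_entry]
  simp only [Rmat, abar2, hA1a, hA1b, hA1c]
  ext i j
  fin_cases i <;> fin_cases j <;>
    simp [Mat00, Mat01, Mat10, Mat11, Matrix.smul_apply, Matrix.add_apply,
      Matrix.sub_apply, smul_eq_mul] <;> ring
end
end
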